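/- arXiv:2509.25349 — 7 statements merged into one kernel-verified Lean document; each statement's English description precedes it below -/
import Mathlib

section
/- For any two points p₁=(ζ₁,v₁) and p₂=(ζ₂,v₂) of the quaternionic Heisenberg group 𝓗, the Cygan distance satisfies ρ₀(p₁,p₂)² ≤ ((|ζ₁|²+|ζ₂|²)² + |v₁−v₂|²)^{1/2} + 2|ζ₁|·|ζ₂|. -/
open Quaternion Real

noncomputable section

/-- The Cygan distance on the quaternionic Heisenberg group `𝓗 = ℍ × Im ℍ`:
`ρ₀((ζ₁,v₁),(ζ₂,v₂)) = | |ζ₁−ζ₂|² + v₁−v₂−2·Im(ζ̄₂ζ₁) |^{1/2}`, the outer `|·|`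
being the quaternionic norm. -/
def cygan (ζ₁ v₁ ζ₂ v₂ : ℍ) : ℝ :=
  Real.sqrt ‖((‖ζ₁ - ζ₂‖ ^ 2 : ℝ) : ℍ) + v₁ - v₂ - 2 * (star ζ₂ * ζ₁).im‖

/-! Expanding `‖ζ₁ − ζ₂‖² = ‖ζ₁‖² + ‖ζ₂‖² − 2 Re(ζ̄₂ζ₁)` absorbs the real part of `ζ̄₂ζ₁`, so the
quaternion inside the Cygan gauge is `(‖ζ₁‖² + ‖ζ₂‖²) + (v₁ − v₂) − 2ζ̄₂ζ₁`. The triangle inequality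
splits off `‖2ζ̄₂ζ₁‖ = 2‖ζ₁‖‖ζ₂‖`, and what remains is a real number plus a purely imaginary
quaternion, whose norm is given by Pythagoras. -/

namespace Quaternion

theorem coe_two : ((2 : ℝ) : ℍ) = 2 := by norm_cast

theorem norm_two : ‖(2 : ℍ)‖ = 2 := by rw [← coe_two, norm_coe, Real.norm_two]

theorem re_star_mul (a b : ℍ) : (star b * a).re = inner ℝ a b := by
  rw [inner_def]
  simp only [re_mul, re_star, imI_star, imJ_star, imK_star]
  ring

theorem norm_sub_sq_eq (a b : ℍ) :
    ‖a - b‖ ^ 2 = ‖a‖ ^ 2 + ‖b‖ ^ 2 - 2 * (star b * a).re := by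
  rw [norm_sub_sq_real, re_star_mul]
  ring

theorem norm_coe_add_of_re_eq_zero (r : ℝ) {w : ℍ} (hw : w.re = 0) :
    ‖(r : ℍ) + w‖ = √(r ^ 2 + ‖w‖ ^ 2) := by
  have horth : inner ℝ (r : ℍ) w = 0 := by simp [inner_def, hw]
  rw [norm_add_eq_sqrt_iff_real_inner_eq_zero.2 horth, norm_coe, ← sq, ← sq, Real.norm_eq_abs,
    sq_abs]

end Quaternion

theorem cygan_sq_eq (ζ₁ v₁ ζ₂ v₂ : ℍ) :
    cygan ζ₁ v₁ ζ₂ v₂ ^ 2 =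
      ‖((‖ζ₁‖ ^ 2 + ‖ζ₂‖ ^ 2 : ℝ) : ℍ) + (v₁ - v₂) - 2 * (star ζ₂ * ζ₁)‖ := by
  have him : (star ζ₂ * ζ₁).im = star ζ₂ * ζ₁ - ((star ζ₂ * ζ₁).re : ℍ) :=
    eq_sub_of_add_eq' (re_add_im _)
  rw [cygan, Real.sq_sqrt (norm_nonneg _), norm_sub_sq_eq, him]
  push_cast
  rw [coe_two]
  noncomm_ring

/-- The basic estimate for the Cygan distance:
`ρ₀(p₁,p₂)² ≤ ((|ζ₁|²+|ζ₂|²)² + |v₁−v₂|²)^{1/2} + 2|ζ₁||ζ₂|`. -/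
theorem cygan_sq_le
    (ζ₁ v₁ ζ₂ v₂ : ℍ) (hv₁ : v₁.re = 0) (hv₂ : v₂.re = 0) :
    cygan ζ₁ v₁ ζ₂ v₂ ^ 2 ≤
      Real.sqrt ((‖ζ₁‖ ^ 2 + ‖ζ₂‖ ^ 2) ^ 2 + ‖v₁ - v₂‖ ^ 2) + 2 * ‖ζ₁‖ * ‖ζ₂‖ := by
  have hv : (v₁ - v₂).re = 0 := by rw [re_sub, hv₁, hv₂, sub_zero]
  rw [cygan_sq_eq]
  calc _ ≤ ‖((‖ζ₁‖ ^ 2 + ‖ζ₂‖ ^ 2 : ℝ) : ℍ) + (v₁ - v₂)‖ + ‖2 * (star ζ₂ * ζ₁)‖ :=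
        norm_sub_le _ _
    _ = _ := by
      rw [norm_coe_add_of_re_eq_zero _ hv, norm_mul, norm_mul, Quaternion.norm_star,
        Quaternion.norm_two, mul_assoc, mul_comm ‖ζ₂‖]
end
end

section
/- Let r > 0 and let p₁=(ζ₁,v₁) ≠ p₂=(ζ₂,v₂) be points of the quaternionic Heisenberg group 𝓗 lying on the Cygan sphere of radius r centered at the origin (i.e. |ζ_j|⁴+|v_j|² = r⁴ for j=1,2), with v₁ = v₂. If equality ρ₀(p₁,p₂)² = ((|ζ₁|²+|ζ₂|²)² + |v₁−v₂|²)^{1/2} + 2|ζ₁|·|ζ₂| holds, then ζ₁ = −ζ₂. -/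
/-! At equal heights the squared Cygan distance is `‖|ζ₁|² + |ζ₂|² − 2 ζ̄₂ζ₁‖`. On a sphere about
the origin equal heights force `|ζ₁| = |ζ₂|`, and then `|ζ₁|² + |ζ₂|² − 2 ζ̄₂ζ₁ = 2 ζ̄₂ (ζ₂ − ζ₁)`.
The equality hypothesis becomes `|ζ₂| |ζ₁ − ζ₂| = |ζ₂| (|ζ₁| + |ζ₂|)`: unless both points lie on
the vertical axis, this is equality in the triangle inequality for `ζ₁` and `−ζ₂`, two vectors of
the same norm, so strict convexity of `ℍ` gives `ζ₁ = −ζ₂`. -/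

open Quaternion Real

noncomputable section

theorem Quaternion.norm_sub_sq_eq_s9 (a b : ℍ) :
    ‖a - b‖ ^ 2 = ‖a‖ ^ 2 + ‖b‖ ^ 2 - 2 * (star b * a).re := by
  rw [norm_sub_sq_real, inner_def]
  simp only [re_mul, re_star, imI_star, imJ_star, imK_star]
  ring

theorem cygan_sq_of_same_height (ζ₁ ζ₂ v : ℍ) :
    cygan ζ₁ v ζ₂ v ^ 2 = ‖((‖ζ₁‖ ^ 2 + ‖ζ₂‖ ^ 2 : ℝ) : ℍ) - 2 * (star ζ₂ * ζ₁)‖ := by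
  rw [cygan, Real.sq_sqrt (norm_nonneg _), add_sub_cancel_right, Quaternion.norm_sub_sq_eq_s9]
  conv_rhs => rw [← re_add_im (star ζ₂ * ζ₁)]
  simp only [two_mul, coe_sub, coe_add]
  abel_nf

theorem cygan_sq_of_same_height_of_norm_eq {ζ₁ ζ₂ : ℍ} (v : ℍ) (h : ‖ζ₁‖ = ‖ζ₂‖) :
    cygan ζ₁ v ζ₂ v ^ 2 = 2 * ‖ζ₂‖ * ‖ζ₁ - ζ₂‖ := by
  have hfactor :
      ((‖ζ₂‖ ^ 2 + ‖ζ₂‖ ^ 2 : ℝ) : ℍ) - 2 * (star ζ₂ * ζ₁) = 2 * (star ζ₂ * (ζ₂ - ζ₁)) := by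
    rw [mul_sub, star_mul_self, normSq_eq_norm_mul_self]
    simp only [two_mul, sq, coe_add]
    abel
  rw [cygan_sq_of_same_height, h, hfactor, norm_mul, norm_mul, norm_star, norm_sub_rev,
    show (2 : ℍ) = ((2 : ℝ) : ℍ) by norm_cast, norm_coe, Real.norm_two, mul_assoc]

theorem norm_eq_of_cygan_sphere_same_height {r : ℝ} {ζ₁ ζ₂ v : ℍ}
    (h₁ : ‖ζ₁‖ ^ 4 + ‖v‖ ^ 2 = r ^ 4) (h₂ : ‖ζ₂‖ ^ 4 + ‖v‖ ^ 2 = r ^ 4) : ‖ζ₁‖ = ‖ζ₂‖ :=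
  (pow_left_inj₀ (norm_nonneg _) (norm_nonneg _) four_ne_zero).mp (by linarith)

theorem cygan_eq_on_sphere_same_height_general
    (r : ℝ)
    (ζ₁ v₁ ζ₂ v₂ : ℍ)
    (hs₁ : ‖ζ₁‖ ^ 4 + ‖v₁‖ ^ 2 = r ^ 4) (hs₂ : ‖ζ₂‖ ^ 4 + ‖v₂‖ ^ 2 = r ^ 4)
    (hv : v₁ = v₂)
    (heq : cygan ζ₁ v₁ ζ₂ v₂ ^ 2 =
      Real.sqrt ((‖ζ₁‖ ^ 2 + ‖ζ₂‖ ^ 2) ^ 2 + ‖v₁ - v₂‖ ^ 2) + 2 * ‖ζ₁‖ * ‖ζ₂‖) :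
    ζ₁ = -ζ₂ := by
  subst hv
  have hn : ‖ζ₁‖ = ‖ζ₂‖ := norm_eq_of_cygan_sphere_same_height hs₁ hs₂
  rw [cygan_sq_of_same_height_of_norm_eq v₁ hn, hn, sub_self, norm_zero, zero_pow two_ne_zero,
    add_zero, Real.sqrt_sq (by positivity)] at heq
  rcases eq_or_ne ‖ζ₂‖ 0 with h0 | h0
  · rw [norm_eq_zero.mp h0, norm_eq_zero.mp (hn.trans h0), neg_zero]
  · refine eq_of_norm_eq_of_norm_add_eq (by rwa [norm_neg]) ?_
    rw [← sub_eq_add_neg, norm_neg, hn]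
    exact mul_left_cancel₀ (by positivity) (heq.trans (by ring))

/-- If two distinct points of a Cygan sphere about the origin have the
same vertical coordinate and realize equality in the Cygan distance estimate, then
`ζ₁ = −ζ₂`. -/
theorem cygan_eq_on_sphere_same_height
    (r : ℝ) (hr : 0 < r)
    (ζ₁ v₁ ζ₂ v₂ : ℍ) (hv₁ : v₁.re = 0) (hv₂ : v₂.re = 0)
    (hs₁ : ‖ζ₁‖ ^ 4 + ‖v₁‖ ^ 2 = r ^ 4) (hs₂ : ‖ζ₂‖ ^ 4 + ‖v₂‖ ^ 2 = r ^ 4)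
    (hne : (ζ₁, v₁) ≠ (ζ₂, v₂)) (hv : v₁ = v₂)
    (heq : cygan ζ₁ v₁ ζ₂ v₂ ^ 2 =
      Real.sqrt ((‖ζ₁‖ ^ 2 + ‖ζ₂‖ ^ 2) ^ 2 + ‖v₁ - v₂‖ ^ 2) + 2 * ‖ζ₁‖ * ‖ζ₂‖) :
    ζ₁ = -ζ₂ :=
  cygan_eq_on_sphere_same_height_general r ζ₁ v₁ ζ₂ v₂ hs₁ hs₂ hv heq
end
end

section
/- Let r > 0 and let p₁=(ζ₁,v₁) and p₂=(ζ₂,v₂) be points of the quaternionic Heisenberg group 𝓗 lying on the Cygan sphere of radius r centered at the origin (i.e. |ζ_j|⁴+|v_j|² = r⁴ for j=1,2). Then ρ₀(p₁,p₂) ≤ 2^{1/4}·r·((1 − |v₁|/r²)^{1/3} + (1 + |v₁|/r²)^{1/3})^{3/4}. In particular, the Cygan sphere of radius r about the origin is entirely contained in the closed Cygan ball of this radius centered at p₁. -/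
open Quaternion Real

noncomputable section

set_option maxHeartbeats 1000000

private theorem theta_id (u p γ : ℝ) (hp : p^3 = 2 + 3*u*p) :
    (u^3*((2+6*u*p-6*γ)^2-32*γ-32*γ^2) + 4*(1-u^3)*(u^3-γ^2))^2
      - (4*(2+6*u*p-6*γ)+32*γ)^2*(u^3*(1-u^3)*(u^3-γ^2))
    = (γ - u^2*(p^2-3*u))^2 *
      (16*γ^2 + (480*u^3 + 960*u^4*p + 32*u^2*p^2 - 1024*u^6 - 1536*u^7*p)*γ
        + (3984*u^6 + 8064*u^7*p + 288*u^4*p + 3136*u^8*p^2 + 1296*u^5*p^2)) := by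
  linear_combination (48*u^4*p*γ^2 + 512*u^6*γ + 1920*u^6*γ^2 - 32*u^6*p^3*γ + 2208*u^7*p*γ - 288*u^8*p^2 - 960*u^8*p^2*γ + 13824*u^9*γ - 3072*u^9*γ^2 - 1296*u^9*p^3 + 1200*u^10*p + 7296*u^10*p*γ - 8064*u^11*p^2 + 1536*u^11*p^2*γ + 17920*u^12 - 4608*u^12*γ - 3136*u^12*p^3 + 9408*u^13*p) * hp

private theorem Q_nonneg (u p γ : ℝ) (hu0 : 0 ≤ u) (hγ0 : 0 ≤ γ) (hγ1 : γ ≤ 1) (hp1 : 1 ≤ p) :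
    0 ≤ 16*γ^2 + (480*u^3 + 960*u^4*p + 32*u^2*p^2 - 1024*u^6 - 1536*u^7*p)*γ
        + (3984*u^6 + 8064*u^7*p + 288*u^4*p + 3136*u^8*p^2 + 1296*u^5*p^2) := by
  have h1 : 0 ≤ (1024*u^6 + 1536*u^7*p)*(1-γ) := by
    apply mul_nonneg _ (by linarith); positivity
  nlinarith [sq_nonneg γ, mul_nonneg (mul_nonneg (pow_nonneg hu0 3) hγ0) (by linarith : (0:ℝ) ≤ p), mul_nonneg (pow_nonneg hu0 3) hγ0, mul_nonneg (mul_nonneg (pow_nonneg hu0 4) hγ0) (by linarith : (0:ℝ) ≤ p), mul_nonneg (sq_nonneg (u*p)) hγ0, mul_nonneg (pow_nonneg hu0 4) (by linarith : (0:ℝ) ≤ p), mul_nonneg (pow_nonneg hu0 5) (sq_nonneg p), mul_nonneg (pow_nonneg hu0 7) (by linarith : (0:ℝ) ≤ p), mul_nonneg (pow_nonneg hu0 8) (sq_nonneg p)]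

private theorem L_nonneg (u p γ : ℝ) (hu0 : 0 ≤ u) (hu1 : u ≤ 1) (hpu : 4*u ≤ p^2)
    (hp1 : 1 ≤ p) (hγ0 : 0 ≤ γ) (hγu : γ^2 ≤ u^3) :
    0 ≤ u^3*((2+6*u*p-6*γ)^2-32*γ-32*γ^2) + 4*(1-u^3)*(u^3-γ^2) := by
  have hu3 : u^3 ≤ 1 := pow_le_one₀ hu0 hu1
  have hup0 : 0 ≤ u*p := mul_nonneg hu0 (by linarith)
  have hup2 : 2*γ ≤ u*p := by
    nlinarith [mul_nonneg (mul_nonneg hu0 hu0) (sub_nonneg.2 hpu), sq_nonneg (u*p - 2*γ), sq_nonneg (u*p + 2*γ)]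
  have hsq : 0 ≤ (u*p - 2*γ)*(4 + 6*u*p + 6*γ) := by
    apply mul_nonneg (by linarith); nlinarith
  nlinarith [mul_nonneg (pow_nonneg hu0 3) hsq, mul_nonneg (sub_nonneg.2 hγu) (sub_nonneg.2 hu3), mul_nonneg (pow_nonneg hu0 3) (sq_nonneg (1-γ))]

theorem delta_nonneg (u p γ τ : ℝ) (hu0 : 0 ≤ u) (hu1 : u ≤ 1)
    (hp : p^3 = 2 + 3*u*p) (hp1 : 1 ≤ p) (hpu : 4*u ≤ p^2)
    (hγ0 : 0 ≤ γ) (hγu : γ^2 ≤ u^3) (hτ0 : 0 ≤ τ)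
    (he4 : u^3*τ^2 = (1-u^3)*(u^3-γ^2)) :
    0 ≤ (2+6*u*p-6*γ-2*τ)^2 - 32*γ*(1+τ+γ) := by
  rcases eq_or_lt_of_le hu0 with h0 | hupos
  · have hu30 : u^3 = 0 := by rw [← h0]; ring
    have hγz : γ = 0 := by nlinarith [sq_nonneg γ]
    rw [hγz, ← h0]; nlinarith [sq_nonneg (2-2*τ)]
  have hu3 : u^3 ≤ 1 := pow_le_one₀ hu0 hu1
  have hup0 : 0 ≤ u*p := mul_nonneg hu0 (by linarith)
  have hup2 : 2*γ ≤ u*p := by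
    nlinarith [mul_nonneg (mul_nonneg hu0 hu0) (sub_nonneg.2 hpu), sq_nonneg (u*p - 2*γ), sq_nonneg (u*p + 2*γ)]
  have hγ1 : γ ≤ 1 := by nlinarith
  have hL := L_nonneg u p γ hu0 hu1 hpu hp1 hγ0 hγu
  have hK : 0 ≤ (4*(2+6*u*p-6*γ)+32*γ)*u^3 := by
    apply mul_nonneg (by linarith); positivity
  have hTheta : ((4*(2+6*u*p-6*γ)+32*γ)*u^3)^2*τ^2
      ≤ (u^3*((2+6*u*p-6*γ)^2-32*γ-32*γ^2) + 4*(1-u^3)*(u^3-γ^2))^2 := by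
    have hid := theta_id u p γ hp
    have hQ := Q_nonneg u p γ hu0 hγ0 hγ1 hp1
    have hktau : ((4*(2+6*u*p-6*γ)+32*γ)*u^3)^2*τ^2
        = (4*(2+6*u*p-6*γ)+32*γ)^2*(u^3*(1-u^3)*(u^3-γ^2)) := by
      have h2 : ((4*(2+6*u*p-6*γ)+32*γ)*u^3)^2*τ^2
          = (4*(2+6*u*p-6*γ)+32*γ)^2*u^3*(u^3*τ^2) := by ring
      rw [h2, he4]; ring
    rw [hktau]
    nlinarith [mul_nonneg (sq_nonneg (γ - u^2*(p^2-3*u))) hQ, hid]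
  have hKτL : (4*(2+6*u*p-6*γ)+32*γ)*u^3*τ
      ≤ u^3*((2+6*u*p-6*γ)^2-32*γ-32*γ^2) + 4*(1-u^3)*(u^3-γ^2) := by
    nlinarith [mul_nonneg hK hτ0, hTheta]
  have hfinal : 0 ≤ u^3 * ((2+6*u*p-6*γ-2*τ)^2 - 32*γ*(1+τ+γ)) := by
    have hex : u^3 * ((2+6*u*p-6*γ-2*τ)^2 - 32*γ*(1+τ+γ))
        = (u^3*((2+6*u*p-6*γ)^2-32*γ-32*γ^2) + 4*(1-u^3)*(u^3-γ^2))
          - (4*(2+6*u*p-6*γ)+32*γ)*u^3*τ + 4*(u^3*τ^2 - (1-u^3)*(u^3-γ^2)) := by ring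
    rw [hex, he4]; simp; linarith
  have h3 : (0:ℝ) < u^3 := by positivity
  exact nonneg_of_mul_nonneg_right hfinal h3
private theorem aux_le_sq (x c : ℝ) (hx : 0 ≤ x) (hc : 0 ≤ c) (h : x^2 ≤ c^2) : x ≤ c := by
  nlinarith [sq_nonneg (x-c), sq_nonneg (x+c)]

private theorem aux_cube_le_one (u : ℝ) (hu : 0 ≤ u) (h : u^3 ≤ 1) : u ≤ 1 := by
  nlinarith [sq_nonneg (u-1), sq_nonneg (u+1)]

private theorem aux_ambg (a b : ℝ) : 4*(a*b) ≤ (a+b)^2 := by nlinarith [sq_nonneg (a-b)]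

private theorem aux_shrink (x y : ℝ) (hx : 0 ≤ x) (hy : 0 ≤ y) : x*(1-y^2) ≤ x := by
  nlinarith [mul_nonneg hx (sq_nonneg y)]

theorem normcore (u p P τ : ℝ) (hu0 : 0 ≤ u) (hu1 : u ≤ 1)
    (hp : p^3 = 2 + 3*u*p) (hp1 : 1 ≤ p) (hpu : 4*u ≤ p^2)
    (hP0 : 0 ≤ P) (hγu : (P^2)^2 ≤ u^3) (hτ0 : 0 ≤ τ) (hτ1 : τ ≤ 1)
    (he4 : u^3*τ^2 = (1-u^3)*(u^3-(P^2)^2)) :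
    Real.sqrt (2+2*P^2+2*τ) + 2*P ≤ Real.sqrt (2*p^3) := by
  have hp0 : (0:ℝ) ≤ p := by linarith
  have hγ0 : (0:ℝ) ≤ P^2 := sq_nonneg P
  have hΔ := delta_nonneg u p (P^2) τ hu0 hu1 hp hp1 hpu hγ0 hγu hτ0 he4
  have hX0 : (0:ℝ) ≤ 2+2*P^2+2*τ := by linarith
  have hg0 : 0 ≤ Real.sqrt (2+2*P^2+2*τ) := Real.sqrt_nonneg _
  have hgg : (Real.sqrt (2+2*P^2+2*τ))^2 = 2+2*P^2+2*τ := Real.sq_sqrt hX0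
  have hup0 : 0 ≤ u*p := mul_nonneg hu0 hp0
  have hup2 : 2*P^2 ≤ u*p := by
    nlinarith [mul_nonneg (mul_nonneg hu0 hu0) (sub_nonneg.2 hpu), sq_nonneg (u*p - 2*P^2), sq_nonneg (u*p + 2*P^2)]
  have hE2 : 0 ≤ 2+6*u*p-6*P^2-2*τ := by nlinarith
  have h4Pg : 4*P*Real.sqrt (2+2*P^2+2*τ) ≤ 2+6*u*p-6*P^2-2*τ := by
    have hsq : (4*P*Real.sqrt (2+2*P^2+2*τ))^2 ≤ (2+6*u*p-6*P^2-2*τ)^2 := by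
      have he : (4*P*Real.sqrt (2+2*P^2+2*τ))^2 = 16*P^2*(2+2*P^2+2*τ) := by
        rw [mul_pow, mul_pow, hgg]; ring
      rw [he]; nlinarith
    nlinarith [mul_nonneg (mul_nonneg (by norm_num : (0:ℝ) ≤ 4) hP0) hg0]
  rw [show Real.sqrt (2+2*P^2+2*τ) + 2*P
      = Real.sqrt ((Real.sqrt (2+2*P^2+2*τ) + 2*P)^2) by rw [Real.sqrt_sq (by linarith)]]
  apply Real.sqrt_le_sqrt
  have : (Real.sqrt (2+2*P^2+2*τ) + 2*P)^2
      = (2+2*P^2+2*τ) + 4*P*Real.sqrt (2+2*P^2+2*τ) + 4*P^2 := by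
    rw [add_sq, hgg]; ring
  rw [this, hp]; linarith

theorem core (r n1 n2 V W : ℝ) (hr : 0 < r) (hn1 : 0 ≤ n1) (hn2 : 0 ≤ n2)
    (hV : 0 ≤ V) (hW : 0 ≤ W) (h1 : n1^4 + V^2 = r^4) (h2 : n2^4 + W^2 = r^4) :
    Real.sqrt (Real.sqrt ((n1^2+n2^2)^2 + (V+W)^2) + 2*(n1*n2)) ≤
      2^((1:ℝ)/4) * r * ((1 - V/r^2)^((1:ℝ)/3) + (1 + V/r^2)^((1:ℝ)/3))^((3:ℝ)/4) := by
  have hr2 : (0:ℝ) < r^2 := by positivity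
  have hrne : (r:ℝ) ≠ 0 := ne_of_gt hr
  set t : ℝ := V/r^2 with htdef
  set s : ℝ := W/r^2 with hsdef
  have htr : t * r^2 = V := by rw [htdef]; field_simp
  have hsr : s * r^2 = W := by rw [hsdef]; field_simp
  have hVr : V ≤ r^2 := by
    apply aux_le_sq V (r^2) hV (le_of_lt hr2)
    have h4 : (r^2)^2 = r^4 := by ring
    rw [h4]; nlinarith [pow_nonneg hn1 4]
  have hWr : W ≤ r^2 := by
    apply aux_le_sq W (r^2) hW (le_of_lt hr2)
    have h4 : (r^2)^2 = r^4 := by ring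
    rw [h4]; nlinarith [pow_nonneg hn2 4]
  have ht0 : 0 ≤ t := by positivity
  have ht1 : t ≤ 1 := by rw [htdef, div_le_one hr2]; exact hVr
  have hs0 : 0 ≤ s := by positivity
  have hs1 : s ≤ 1 := by rw [hsdef, div_le_one hr2]; exact hWr
  set a : ℝ := (1-t)^((1:ℝ)/3) with hadef
  set b : ℝ := (1+t)^((1:ℝ)/3) with hbdef
  have h1t : (0:ℝ) ≤ 1 - t := by linarith
  have h1t' : (0:ℝ) ≤ 1 + t := by linarith
  have ha0 : 0 ≤ a := Real.rpow_nonneg h1t _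
  have hb0 : 0 ≤ b := Real.rpow_nonneg h1t' _
  have ha3 : a^3 = 1 - t := by
    rw [hadef, ← Real.rpow_natCast ((1-t)^((1:ℝ)/3)) 3, ← Real.rpow_mul h1t]
    norm_num
  have hb3 : b^3 = 1 + t := by
    rw [hbdef, ← Real.rpow_natCast ((1+t)^((1:ℝ)/3)) 3, ← Real.rpow_mul h1t']
    norm_num
  set u : ℝ := a*b with hudef
  set p : ℝ := a+b with hpdef
  have hu0 : 0 ≤ u := mul_nonneg ha0 hb0
  have hueq : u^3 = 1 - t^2 := by
    have h : u^3 = a^3 * b^3 := by rw [hudef]; ring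
    rw [h, ha3, hb3]; ring
  have hu1 : u ≤ 1 := aux_cube_le_one u hu0 (by rw [hueq]; nlinarith [sq_nonneg t])
  have hb1 : 1 ≤ b := by
    rw [hbdef]
    calc (1:ℝ) = 1^((1:ℝ)/3) := by rw [Real.one_rpow]
    _ ≤ (1+t)^((1:ℝ)/3) := Real.rpow_le_rpow (by norm_num) (by linarith) (by norm_num)
  have hp1 : 1 ≤ p := by rw [hpdef]; linarith
  have hp0 : (0:ℝ) ≤ p := by linarith
  have hprel : p^3 = 2 + 3*u*p := by
    have h : p^3 = a^3 + b^3 + 3*(a*b)*(a+b) := by rw [hpdef]; ring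
    rw [h, ha3, hb3, ← hudef, ← hpdef]; ring
  have hpu : 4*u ≤ p^2 := by rw [hudef, hpdef]; exact aux_ambg a b
  set P : ℝ := n1*n2/r^2 with hPdef
  set τ : ℝ := V*W/r^4 with hτdef
  have hPr : P * r^2 = n1*n2 := by rw [hPdef]; field_simp
  have hτr : τ * r^4 = V*W := by rw [hτdef]; field_simp
  have hP0 : 0 ≤ P := by positivity
  have hτ0 : 0 ≤ τ := by positivity
  have hτ1 : τ ≤ 1 := by
    have hvw : V*W ≤ r^4 := by
      calc V*W ≤ r^2*r^2 := mul_le_mul hVr hWr hW (le_of_lt hr2)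
      _ = r^4 := by ring
    rw [hτdef]
    exact (div_le_one (by positivity)).mpr hvw
  have hn14 : (n1*n2)^4 = (r^4-V^2)*(r^4-W^2) := by
    have e1 : n1^4 = r^4 - V^2 := by linarith
    have e2 : n2^4 = r^4 - W^2 := by linarith
    calc (n1*n2)^4 = n1^4 * n2^4 := by ring
    _ = (r^4-V^2)*(r^4-W^2) := by rw [e1, e2]
  have hP4 : (P^2)^2 = u^3*(1-s^2) := by
    have hA : (P^2)^2 * r^8 = (n1*n2)^4 := by
      calc (P^2)^2 * r^8 = (P*r^2)^4 := by ring
      _ = (n1*n2)^4 := by rw [hPr]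
    have hB : (u^3*(1-s^2)) * r^8 = (r^4-V^2)*(r^4-W^2) := by
      rw [hueq]
      calc (1-t^2)*(1-s^2) * r^8 = (r^4-(t*r^2)^2)*(r^4-(s*r^2)^2) := by ring
      _ = (r^4-V^2)*(r^4-W^2) := by rw [htr, hsr]
    have := hA.trans (hn14.trans hB.symm)
    exact mul_right_cancel₀ (pow_ne_zero 8 hrne) this
  have hγu : (P^2)^2 ≤ u^3 := by
    rw [hP4]; exact aux_shrink (u^3) s (pow_nonneg hu0 3) hs0
  have hτts : τ = t*s := by
    have : τ * r^4 = (t*s) * r^4 := by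
      rw [hτr]
      calc V*W = (t*r^2)*(s*r^2) := by rw [htr, hsr]
      _ = (t*s)*r^4 := by ring
    exact mul_right_cancel₀ (pow_ne_zero 4 hrne) this
  have he4 : u^3*τ^2 = (1-u^3)*(u^3-(P^2)^2) := by
    rw [hτts, hP4, hueq]; ring
  have key := normcore u p P τ hu0 hu1 hprel hp1 hpu hP0 hγu hτ0 hτ1 he4
  have hγr : P^2 * r^4 = (n1*n2)^2 := by
    calc P^2 * r^4 = (P*r^2)^2 := by ring
    _ = (n1*n2)^2 := by rw [hPr]
  have hinner : (n1^2+n2^2)^2 + (V+W)^2 = r^4 * (2+2*P^2+2*τ) := by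
    have e : (n1^2+n2^2)^2 + (V+W)^2 = 2*r^4 + 2*(n1*n2)^2 + 2*(V*W) := by
      linear_combination h1 + h2
    rw [e, ← hγr, ← hτr]; ring
  have hLHS : Real.sqrt (Real.sqrt ((n1^2+n2^2)^2 + (V+W)^2) + 2*(n1*n2))
      = r * Real.sqrt (Real.sqrt (2+2*P^2+2*τ) + 2*P) := by
    rw [hinner]
    have hs1' : Real.sqrt (r^4 * (2+2*P^2+2*τ)) = r^2 * Real.sqrt (2+2*P^2+2*τ) := by
      rw [Real.sqrt_mul (by positivity), show r^4 = (r^2)^2 by ring,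
        Real.sqrt_sq (le_of_lt hr2)]
    rw [hs1']
    have hs2' : r^2 * Real.sqrt (2+2*P^2+2*τ) + 2*(n1*n2)
        = r^2 * (Real.sqrt (2+2*P^2+2*τ) + 2*P) := by
      rw [← hPr]; ring
    rw [hs2', Real.sqrt_mul (by positivity), show r^2 = r*r by ring,
      Real.sqrt_mul_self (le_of_lt hr)]
  have hRHS : 2^((1:ℝ)/4) * r * (a + b)^((3:ℝ)/4) = r * Real.sqrt (Real.sqrt (2*p^3)) := by
    have e1 : Real.sqrt (Real.sqrt (2*p^3)) = (2*p^3)^((1:ℝ)/4) := by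
      rw [Real.sqrt_eq_rpow, Real.sqrt_eq_rpow, ← Real.rpow_mul (by positivity)]
      norm_num
    have e2 : (2*p^3)^((1:ℝ)/4) = 2^((1:ℝ)/4) * p^((3:ℝ)/4) := by
      rw [Real.mul_rpow (by norm_num) (by positivity), ← Real.rpow_natCast p 3,
        ← Real.rpow_mul hp0]
      norm_num
    rw [e1, e2, hpdef]; ring
  rw [hLHS, hRHS]
  exact mul_le_mul_of_nonneg_left (Real.sqrt_le_sqrt key) (le_of_lt hr)

private theorem norm_sq_eq (x : ℍ) : ‖x‖^2 = Quaternion.normSq x := by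
  rw [sq, ← Quaternion.normSq_eq_norm_mul_self]

private theorem norm_coe_add_im (X : ℝ) (w : ℍ) (hw : w.re = 0) :
    ‖(X:ℍ) + w‖^2 = X^2 + ‖w‖^2 := by
  rw [norm_sq_eq, norm_sq_eq]
  simp [Quaternion.normSq_def', hw]
  ring


/-- Any two points of the Cygan sphere of radius `r` about the origin
are at Cygan distance at most `2^{1/4}·r·((1−|v₁|/r²)^{1/3}+(1+|v₁|/r²)^{1/3})^{3/4}`;
i.e. the sphere is contained in the closed Cygan ball of this radius centred at `p₁`. -/
theorem cygan_sphere_subset_ball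
    (r : ℝ) (hr : 0 < r)
    (ζ₁ v₁ : ℍ) (hv₁ : v₁.re = 0) (hs₁ : ‖ζ₁‖ ^ 4 + ‖v₁‖ ^ 2 = r ^ 4) :
    ∀ ζ₂ v₂ : ℍ, v₂.re = 0 → ‖ζ₂‖ ^ 4 + ‖v₂‖ ^ 2 = r ^ 4 →
      cygan ζ₁ v₁ ζ₂ v₂ ≤
        (2 : ℝ) ^ ((1 : ℝ) / 4) * r *
          ((1 - ‖v₁‖ / r ^ 2) ^ ((1 : ℝ) / 3) +
            (1 + ‖v₁‖ / r ^ 2) ^ ((1 : ℝ) / 3)) ^ ((3 : ℝ) / 4) := by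
  intro ζ₂ v₂ hv₂ hs₂
  have hcore := core r ‖ζ₁‖ ‖ζ₂‖ ‖v₁‖ ‖v₂‖ hr (norm_nonneg _) (norm_nonneg _)
    (norm_nonneg _) (norm_nonneg _) hs₁ hs₂
  refine le_trans ?_ hcore
  rw [cygan]
  apply Real.sqrt_le_sqrt
  -- bound the norm of the Cygan quaternion
  set c : ℍ := star ζ₂ * ζ₁ with hcdef
  have hns : ‖ζ₁ - ζ₂‖^2 = ‖ζ₁‖^2 + ‖ζ₂‖^2 - 2*c.re := by
    rw [norm_sq_eq, norm_sq_eq, norm_sq_eq, hcdef]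
    simp [Quaternion.normSq_def', Quaternion.re_mul]
    ring
  have hc2 : (2:ℍ)*c = 2*((c.re:ℝ):ℍ) + 2*c.im := by
    nth_rewrite 1 [← Quaternion.re_add_im c]
    rw [mul_add]
  have hco : ((‖ζ₁‖^2 + ‖ζ₂‖^2 - 2*c.re : ℝ) : ℍ)
      = ((‖ζ₁‖^2 + ‖ζ₂‖^2 : ℝ):ℍ) - 2*((c.re:ℝ):ℍ) := by
    push_cast
    rw [show ((2:ℝ):ℍ) = (2:ℍ) from by norm_cast]
  have hq : ((‖ζ₁ - ζ₂‖^2 : ℝ) : ℍ) + v₁ - v₂ - 2*c.im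
      = (((‖ζ₁‖^2 + ‖ζ₂‖^2 : ℝ)) : ℍ) + (v₁ - v₂) - 2*c := by
    rw [hns, hco, hc2]
    abel
  rw [hq]
  have step1 : ‖(((‖ζ₁‖^2 + ‖ζ₂‖^2 : ℝ)) : ℍ) + (v₁ - v₂) - 2*c‖
      ≤ ‖(((‖ζ₁‖^2 + ‖ζ₂‖^2 : ℝ)) : ℍ) + (v₁ - v₂)‖ + 2*(‖ζ₁‖*‖ζ₂‖) := by
    refine le_trans (norm_sub_le _ _) ?_
    have h2c : ‖(2:ℍ)*c‖ = 2*(‖ζ₁‖*‖ζ₂‖) := by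
      rw [norm_mul, hcdef, norm_mul, Quaternion.norm_star]
      have h2 : ‖(2:ℍ)‖ = 2 := by
        rw [show ((2:ℍ)) = ((2:ℝ):ℍ) by push_cast; rfl, Quaternion.norm_coe]
        norm_num
      rw [h2]; ring
    rw [h2c]
  refine le_trans step1 ?_
  have hvre : (v₁ - v₂).re = 0 := by simp [hv₁, hv₂]
  have hnc : ‖(((‖ζ₁‖^2 + ‖ζ₂‖^2 : ℝ)) : ℍ) + (v₁ - v₂)‖
      = Real.sqrt ((‖ζ₁‖^2 + ‖ζ₂‖^2)^2 + ‖v₁ - v₂‖^2) := by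
    rw [← norm_coe_add_im _ _ hvre, Real.sqrt_sq (norm_nonneg _)]
  rw [hnc]
  have hmono : Real.sqrt ((‖ζ₁‖^2 + ‖ζ₂‖^2)^2 + ‖v₁ - v₂‖^2)
      ≤ Real.sqrt ((‖ζ₁‖^2 + ‖ζ₂‖^2)^2 + (‖v₁‖ + ‖v₂‖)^2) := by
    apply Real.sqrt_le_sqrt
    have h1 : ‖v₁ - v₂‖ ≤ ‖v₁‖ + ‖v₂‖ := norm_sub_le _ _
    nlinarith [norm_nonneg (v₁ - v₂), norm_nonneg v₁, norm_nonneg v₂]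
  linarith [hmono]
end
end

section
/- Let α ∈ [−π/4, π/4] and define f_α(θ) = cos(θ+α) + √(cos(2θ)·cos(2α)) for θ ∈ [−π/4, π/4]. Then the maximum of f_α over [−π/4, π/4] exists and equals (1/√2)·((1−sin(2α))^{1/3} + (1+sin(2α))^{1/3})^{3/2}; that is, f_α(θ) ≤ (1/√2)·((1−sin(2α))^{1/3} + (1+sin(2α))^{1/3})^{3/2} for all θ ∈ [−π/4, π/4], and this bound is attained at some θ ∈ [−π/4, π/4]. -/
/-!
Put `p = cos θ + sin θ`, `q = cos θ - sin θ`, `a = cos α + sin α`, `b = cos α - sin α`. On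
`[-π/4, π/4]` these are nonnegative, `p² + q² = 2`, `1 - sin 2α = b²`, `1 + sin 2α = a²`, and
`f_α(θ) = (√(p b) + √(q a))² / 2`. Writing `b = X³`, `a = Y³`, Hölder's inequality with exponents
`4` and `4/3` gives `(√(p X³) + √(q Y³))⁴ ≤ (p² + q²) (X² + Y²)³ = 2 (X² + Y²)³`, which is the
bound. Equality holds when `(p, q)` is proportional to `(X, Y)`, and every nonnegative `(p, q)` on
the circle `p² + q² = 2` comes from some `θ ∈ [-π/4, π/4]`.
-/

open Real

lemma sqrt_mul_add_sqrt_mul_pow_four_le {p q X Y : ℝ} (hp : 0 ≤ p) (hq : 0 ≤ q) (hX : 0 ≤ X)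
    (hY : 0 ≤ Y) :
    (√(p * X ^ 3) + √(q * Y ^ 3)) ^ 4 ≤ (p ^ 2 + q ^ 2) * (X ^ 2 + Y ^ 2) ^ 3 := by
  set m := √(p * X ^ 3)
  set n := √(q * Y ^ 3)
  have hm : m ^ 2 = p * X ^ 3 := sq_sqrt (by positivity)
  have hn : n ^ 2 = q * Y ^ 3 := sq_sqrt (by positivity)
  have hmn : 2 * (m * n) ≤ p * X * Y ^ 2 + q * X ^ 2 * Y :=
    two_mul_le_add_of_sq_le_mul (by positivity) (by positivity)
      (by linear_combination n ^ 2 * hm + p * X ^ 3 * hn)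
  have h₁ : (m + n) ^ 2 ≤ (p * X + q * Y) * (X ^ 2 + Y ^ 2) := by nlinarith
  have h₂ : (p * X + q * Y) ^ 2 ≤ (p ^ 2 + q ^ 2) * (X ^ 2 + Y ^ 2) := by
    nlinarith [sq_nonneg (p * Y - q * X)]
  calc (m + n) ^ 4 = ((m + n) ^ 2) ^ 2 := by ring
    _ ≤ ((p * X + q * Y) * (X ^ 2 + Y ^ 2)) ^ 2 := by gcongr
    _ = (p * X + q * Y) ^ 2 * (X ^ 2 + Y ^ 2) ^ 2 := by ring
    _ ≤ (p ^ 2 + q ^ 2) * (X ^ 2 + Y ^ 2) * (X ^ 2 + Y ^ 2) ^ 2 := by gcongr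
    _ = (p ^ 2 + q ^ 2) * (X ^ 2 + Y ^ 2) ^ 3 := by ring

lemma sqrt_mul_add_sqrt_mul_pow_four_eq {p q X Y : ℝ} (hp : 0 ≤ p) (hq : 0 ≤ q) (hX : 0 ≤ X)
    (hY : 0 ≤ Y) (h : p * Y = q * X) :
    (√(p * X ^ 3) + √(q * Y ^ 3)) ^ 4 = (p ^ 2 + q ^ 2) * (X ^ 2 + Y ^ 2) ^ 3 := by
  set m := √(p * X ^ 3)
  set n := √(q * Y ^ 3)
  have hm : m ^ 2 = p * X ^ 3 := sq_sqrt (by positivity)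
  have hn : n ^ 2 = q * Y ^ 3 := sq_sqrt (by positivity)
  have hmn : m * n = p * X * Y ^ 2 := by
    refine (pow_left_inj₀ (by positivity) (by positivity) two_ne_zero).mp ?_
    linear_combination n ^ 2 * hm + p * X ^ 3 * hn - p * X ^ 2 * Y ^ 3 * h
  have h₁ : (m + n) ^ 2 = (p * X + q * Y) * (X ^ 2 + Y ^ 2) := by
    linear_combination hm + hn + 2 * hmn + X * Y * h
  have h₂ : (p * X + q * Y) ^ 2 = (p ^ 2 + q ^ 2) * (X ^ 2 + Y ^ 2) := by
    linear_combination -(p * Y - q * X) * h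
  calc (m + n) ^ 4 = ((m + n) ^ 2) ^ 2 := by ring
    _ = (p * X + q * Y) ^ 2 * (X ^ 2 + Y ^ 2) ^ 2 := by rw [h₁]; ring
    _ = (p ^ 2 + q ^ 2) * (X ^ 2 + Y ^ 2) ^ 3 := by rw [h₂]; ring

lemma cos_add_sin_eq_sqrt_two_mul_sin (x : ℝ) : cos x + sin x = √2 * sin (x + π / 4) := by
  rw [sin_add, cos_pi_div_four, sin_pi_div_four]
  linear_combination (-(sin x + cos x) / 2) * sq_sqrt (zero_le_two : (0 : ℝ) ≤ 2)

lemma cos_sub_sin_eq_sqrt_two_mul_cos (x : ℝ) : cos x - sin x = √2 * cos (x + π / 4) := by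
  rw [cos_add, cos_pi_div_four, sin_pi_div_four]
  linear_combination (-(cos x - sin x) / 2) * sq_sqrt (zero_le_two : (0 : ℝ) ≤ 2)

lemma cos_add_sin_nonneg {x : ℝ} (hx : x ∈ Set.Icc (-(π / 4)) (π / 4)) : 0 ≤ cos x + sin x := by
  rw [cos_add_sin_eq_sqrt_two_mul_sin]
  exact mul_nonneg (sqrt_nonneg 2)
    (sin_nonneg_of_nonneg_of_le_pi (by linarith [hx.1]) (by linarith [hx.2, pi_pos]))

lemma cos_sub_sin_nonneg {x : ℝ} (hx : x ∈ Set.Icc (-(π / 4)) (π / 4)) : 0 ≤ cos x - sin x := by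
  rw [cos_sub_sin_eq_sqrt_two_mul_cos]
  exact mul_nonneg (sqrt_nonneg 2)
    (cos_nonneg_of_mem_Icc ⟨by linarith [hx.1, pi_pos], by linarith [hx.2]⟩)

lemma exists_mem_Icc_cos_add_sin_eq_and_cos_sub_sin_eq {p q : ℝ} (hp : 0 ≤ p) (hq : 0 ≤ q)
    (h : p ^ 2 + q ^ 2 = 2) :
    ∃ x ∈ Set.Icc (-(π / 4)) (π / 4), cos x + sin x = p ∧ cos x - sin x = q := by
  have h2 : (0 : ℝ) < √2 := by positivity
  have hq2 : q / √2 ≤ 1 := by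
    rw [div_le_one h2, le_sqrt hq zero_le_two]; linarith [sq_nonneg p]
  refine ⟨arccos (q / √2) - π / 4, ⟨?_, ?_⟩, ?_, ?_⟩
  · linarith [arccos_nonneg (q / √2)]
  · linarith [arccos_le_pi_div_two.mpr (by positivity : 0 ≤ q / √2)]
  · rw [cos_add_sin_eq_sqrt_two_mul_sin, sub_add_cancel, sin_arccos, div_pow,
      sq_sqrt zero_le_two, show 1 - q ^ 2 / 2 = (p / √2) ^ 2 by
        rw [div_pow, sq_sqrt zero_le_two]; linarith,
      sqrt_sq (by positivity), mul_div_cancel₀ _ h2.ne']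
  · rw [cos_sub_sin_eq_sqrt_two_mul_cos, sub_add_cancel,
      cos_arccos (by linarith [div_nonneg hq h2.le]) hq2, mul_div_cancel₀ _ h2.ne']

lemma cos_add_sin_sq_add_cos_sub_sin_sq (x : ℝ) :
    (cos x + sin x) ^ 2 + (cos x - sin x) ^ 2 = 2 := by
  linear_combination 2 * sin_sq_add_cos_sq x

lemma one_add_sin_two_mul (x : ℝ) : 1 + sin (2 * x) = (cos x + sin x) ^ 2 := by
  rw [sin_two_mul]; linear_combination -sin_sq_add_cos_sq x

lemma one_sub_sin_two_mul (x : ℝ) : 1 - sin (2 * x) = (cos x - sin x) ^ 2 := by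
  rw [sin_two_mul]; linear_combination -sin_sq_add_cos_sq x

lemma cos_two_mul_eq_cos_add_sin_mul_cos_sub_sin (x : ℝ) :
    cos (2 * x) = (cos x + sin x) * (cos x - sin x) := by
  rw [cos_two_mul']; ring

lemma cos_add_eq_cos_add_sin_mul_cos_sub_sin_add (x y : ℝ) :
    cos (x + y) =
      ((cos x + sin x) * (cos y - sin y) + (cos x - sin x) * (cos y + sin y)) / 2 := by
  rw [cos_add]; ring

lemma cos_add_add_sqrt_cos_two_mul_mul_cos_two_mul {x y : ℝ}
    (hx : x ∈ Set.Icc (-(π / 4)) (π / 4)) (hy : y ∈ Set.Icc (-(π / 4)) (π / 4)) :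
    cos (x + y) + √(cos (2 * x) * cos (2 * y)) =
      (√((cos x + sin x) * (cos y - sin y)) + √((cos x - sin x) * (cos y + sin y))) ^ 2 / 2 := by
  have h₁ : 0 ≤ (cos x + sin x) * (cos y - sin y) :=
    mul_nonneg (cos_add_sin_nonneg hx) (cos_sub_sin_nonneg hy)
  have h₂ : 0 ≤ (cos x - sin x) * (cos y + sin y) :=
    mul_nonneg (cos_sub_sin_nonneg hx) (cos_add_sin_nonneg hy)
  rw [cos_two_mul_eq_cos_add_sin_mul_cos_sub_sin, cos_two_mul_eq_cos_add_sin_mul_cos_sub_sin,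
    show (cos x + sin x) * (cos x - sin x) * ((cos y + sin y) * (cos y - sin y)) =
      (cos x + sin x) * (cos y - sin y) * ((cos x - sin x) * (cos y + sin y)) by ring,
    sqrt_mul h₁, add_sq, sq_sqrt h₁, sq_sqrt h₂, cos_add_eq_cos_add_sin_mul_cos_sub_sin_add]
  ring

lemma rpow_one_div_three_pow_three {x : ℝ} (hx : 0 ≤ x) : (x ^ ((1 : ℝ) / 3)) ^ 3 = x := by
  simpa using rpow_inv_natCast_pow hx (n := 3) (by norm_num)

lemma sq_rpow_one_div_three {x : ℝ} (hx : 0 ≤ x) :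
    (x ^ 2) ^ ((1 : ℝ) / 3) = (x ^ ((1 : ℝ) / 3)) ^ 2 :=
  (rpow_pow_comm hx _ 2).symm

lemma one_div_sqrt_two_mul_rpow_three_halves_sq {W : ℝ} (hW : 0 ≤ W) :
    (1 / √2 * W ^ ((3 : ℝ) / 2)) ^ 2 = W ^ 3 / 2 := by
  rw [mul_pow, ← rpow_mul_natCast hW, div_pow, sq_sqrt zero_le_two]
  norm_num
  ring

lemma sq_div_two_le_one_div_sqrt_two_mul_rpow_three_halves_iff {s W : ℝ} (hW : 0 ≤ W) :
    s ^ 2 / 2 ≤ 1 / √2 * W ^ ((3 : ℝ) / 2) ↔ s ^ 4 ≤ 2 * W ^ 3 := by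
  rw [← pow_le_pow_iff_left₀ (by positivity) (by positivity) two_ne_zero,
    one_div_sqrt_two_mul_rpow_three_halves_sq hW]
  constructor <;> intro h <;> linarith

lemma sq_div_two_eq_one_div_sqrt_two_mul_rpow_three_halves_iff {s W : ℝ} (hW : 0 ≤ W) :
    s ^ 2 / 2 = 1 / √2 * W ^ ((3 : ℝ) / 2) ↔ s ^ 4 = 2 * W ^ 3 := by
  rw [← pow_left_inj₀ (by positivity) (by positivity) two_ne_zero,
    one_div_sqrt_two_mul_rpow_three_halves_sq hW]
  constructor <;> intro h <;> linarith

/-- For `α ∈ [−π/4, π/4]`, the maximum over `[−π/4, π/4]` of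
`f_α(θ) = cos(θ+α) + √(cos 2θ · cos 2α)` exists and equals
`(1/√2)·((1−sin 2α)^{1/3} + (1+sin 2α)^{1/3})^{3/2}`. -/
theorem max_cos_add_sqrt_cos_mul
    (α : ℝ) (hα : α ∈ Set.Icc (-(π / 4)) (π / 4)) :
    (∀ θ ∈ Set.Icc (-(π / 4)) (π / 4),
        Real.cos (θ + α) + Real.sqrt (Real.cos (2 * θ) * Real.cos (2 * α)) ≤
          1 / Real.sqrt 2 *
            ((1 - Real.sin (2 * α)) ^ ((1 : ℝ) / 3) +
              (1 + Real.sin (2 * α)) ^ ((1 : ℝ) / 3)) ^ ((3 : ℝ) / 2)) ∧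
    (∃ θ ∈ Set.Icc (-(π / 4)) (π / 4),
        Real.cos (θ + α) + Real.sqrt (Real.cos (2 * θ) * Real.cos (2 * α)) =
          1 / Real.sqrt 2 *
            ((1 - Real.sin (2 * α)) ^ ((1 : ℝ) / 3) +
              (1 + Real.sin (2 * α)) ^ ((1 : ℝ) / 3)) ^ ((3 : ℝ) / 2)) := by
  have hb := cos_sub_sin_nonneg hα
  have ha := cos_add_sin_nonneg hα
  have hX := rpow_nonneg hb ((1 : ℝ) / 3)
  have hY := rpow_nonneg ha ((1 : ℝ) / 3)
  have hX3 := rpow_one_div_three_pow_three hb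
  have hY3 := rpow_one_div_three_pow_three ha
  rw [one_sub_sin_two_mul, one_add_sin_two_mul, sq_rpow_one_div_three hb,
    sq_rpow_one_div_three ha]
  generalize (cos α - sin α) ^ ((1 : ℝ) / 3) = X at hX hX3 ⊢
  generalize (cos α + sin α) ^ ((1 : ℝ) / 3) = Y at hY hY3 ⊢
  refine ⟨fun θ hθ => ?_, ?_⟩
  · rw [cos_add_add_sqrt_cos_two_mul_mul_cos_two_mul hθ hα,
      sq_div_two_le_one_div_sqrt_two_mul_rpow_three_halves_iff (by positivity), ← hX3, ← hY3,
      ← cos_add_sin_sq_add_cos_sub_sin_sq θ]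
    exact sqrt_mul_add_sqrt_mul_pow_four_le (cos_add_sin_nonneg hθ) (cos_sub_sin_nonneg hθ) hX hY
  · have hW : 0 < X ^ 2 + Y ^ 2 := by
      have h := cos_add_sin_sq_add_cos_sub_sin_sq α
      rw [← hX3, ← hY3] at h
      by_contra! hW
      obtain rfl : X = 0 := by nlinarith
      obtain rfl : Y = 0 := by nlinarith
      norm_num at h
    obtain ⟨c, hc, hcW⟩ : ∃ c, 0 ≤ c ∧ c ^ 2 * (X ^ 2 + Y ^ 2) = 2 :=
      ⟨√(2 / (X ^ 2 + Y ^ 2)), sqrt_nonneg _,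
        by rw [sq_sqrt (by positivity), div_mul_cancel₀ _ hW.ne']⟩
    obtain ⟨θ, hθ, hp, hq⟩ := exists_mem_Icc_cos_add_sin_eq_and_cos_sub_sin_eq
      (mul_nonneg hc hX) (mul_nonneg hc hY) (by linear_combination hcW)
    refine ⟨θ, hθ, ?_⟩
    rw [cos_add_add_sqrt_cos_two_mul_mul_cos_two_mul hθ hα,
      sq_div_two_eq_one_div_sqrt_two_mul_rpow_three_halves_iff (by positivity), ← hX3, ← hY3,
      hp, hq,
      sqrt_mul_add_sqrt_mul_pow_four_eq (mul_nonneg hc hX) (mul_nonneg hc hY) hX hY (by ring)]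
    linear_combination (X ^ 2 + Y ^ 2) ^ 3 * hcW
end

section
/- Let p₁=(ζ₁,v₁) ∈ 𝓗 with p₁ ≠ (0,0), and set K = K(p₁) = (|ζ₁|⁴+|v₁|²)^{1/4}. Define the two centers c₊ = (−ζ₁·(−|ζ₁|²−v₁)^{−1}, v₁/K⁴) and c₋ = (ζ₁·(−|ζ₁|²+v₁)^{−1}, −v₁/K⁴) in 𝓗 (the inverses taken in ℍ). Then every point q ∈ 𝓗 with ρ₀(q, c₊) = 1/K or ρ₀(q, c₋) = 1/K satisfies ρ₀(q, (0,0)) ≤ R₀, where R₀ = (2^{1/4}/K)·((1 − |v₁|/K²)^{1/3} + (1 + |v₁|/K²)^{1/3})^{3/4}. In other words, the Cygan spheres of radius 1/K centered at c₊ and c₋ (the isometric spheres of B and B⁻¹) are contained in the closed Cygan ball of radius R₀ centered at the origin. -/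
/-!
On the sphere `ρ₀((ξ, w), (ζc, vc)) = r` put `A = ‖ξ - ζc‖² + w - vc - 2 Im(ζ̄c ξ)`, so that
`‖A‖ = r²`, and `z = ζ̄c ξ`. Then `‖ξ‖² = Re A - ‖ζc‖² + 2 Re z` and
`‖w‖ ≤ ‖Im A‖ + ‖vc‖ + 2 ‖Im z‖`, so the gauge `‖ξ‖⁴ + ‖w‖²` of `(ξ, w)` is at most the squared
length of `P + Q` with `P = (Re A + ‖ζc‖², ‖Im A‖ + ‖vc‖)` and `Q = 2 (Re z - ‖ζc‖², ‖Im z‖)`.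
Since `‖z‖ = ‖ζc‖ ‖ξ‖`, the point `(Re z, ‖Im z‖)` lies on a circle and
`‖Q‖ = 2 √(‖ζc‖² Re A)`. Writing `‖vc‖ = t r²` and `α, β = (1 ± t) r² (r² ± ‖Im A‖)`, one finds
`‖P‖ = √α + √β` and `‖Q‖ = 2 (αβ)^{1/4}`, so `‖P‖ + ‖Q‖ = (α^{1/4} + β^{1/4})²`, and Hölder's
inequality with exponents `4/3` and `4` gives
`(α^{1/4} + β^{1/4})⁴ ≤ ((1 - t)^{1/3} + (1 + t)^{1/3})³ · 2 r⁴`.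
For the two centres, `r = 1/K` and `t = |v₁|/K²`.
-/

open Quaternion Real

noncomputable section

/-- The Korányi gauge `K(ζ,v) = (|ζ|⁴+|v|²)^{1/4}`. -/
def Kor (ζ v : ℍ) : ℝ := (‖ζ‖ ^ 4 + ‖v‖ ^ 2) ^ ((1 : ℝ) / 4)

lemma cube_mul_add_cube_mul_pow_four_le (u w U W : ℝ) :
    (u ^ 3 * U + w ^ 3 * W) ^ 4 ≤ (u ^ 4 + w ^ 4) ^ 3 * (U ^ 4 + W ^ 4) := by
  have h₁ : (u ^ 3 * U + w ^ 3 * W) ^ 2 ≤ (u ^ 4 + w ^ 4) * (u ^ 2 * U ^ 2 + w ^ 2 * W ^ 2) := by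
    nlinarith [sq_nonneg (u ^ 2 * w * W - w ^ 2 * u * U)]
  have h₂ : (u ^ 2 * U ^ 2 + w ^ 2 * W ^ 2) ^ 2 ≤ (u ^ 4 + w ^ 4) * (U ^ 4 + W ^ 4) := by
    nlinarith [sq_nonneg (u ^ 2 * W ^ 2 - w ^ 2 * U ^ 2)]
  calc (u ^ 3 * U + w ^ 3 * W) ^ 4 = ((u ^ 3 * U + w ^ 3 * W) ^ 2) ^ 2 := by ring
    _ ≤ ((u ^ 4 + w ^ 4) * (u ^ 2 * U ^ 2 + w ^ 2 * W ^ 2)) ^ 2 := by gcongr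
    _ = (u ^ 4 + w ^ 4) ^ 2 * (u ^ 2 * U ^ 2 + w ^ 2 * W ^ 2) ^ 2 := by ring
    _ ≤ (u ^ 4 + w ^ 4) ^ 2 * ((u ^ 4 + w ^ 4) * (U ^ 4 + W ^ 4)) := by gcongr
    _ = (u ^ 4 + w ^ 4) ^ 3 * (U ^ 4 + W ^ 4) := by ring

lemma add_sq_add_add_sq_le {p₁ p₂ q₁ q₂ P Q : ℝ} (hP : p₁ ^ 2 + p₂ ^ 2 = P ^ 2)
    (hQ : q₁ ^ 2 + q₂ ^ 2 = Q ^ 2) (hP₀ : 0 ≤ P) (hQ₀ : 0 ≤ Q) :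
    (p₁ + q₁) ^ 2 + (p₂ + q₂) ^ 2 ≤ (P + Q) ^ 2 := by
  have hcs : p₁ * q₁ + p₂ * q₂ ≤ P * Q := by
    refine (abs_le.mp (abs_le_of_sq_le_sq ?_ (mul_nonneg hP₀ hQ₀))).2
    nlinarith [sq_nonneg (p₁ * q₂ - p₂ * q₁)]
  nlinarith

lemma sq_add_sq_le_of_circle {r t x ia v zr zi : ℝ} (hr : 0 < r) (hx : 0 ≤ x) (hv : 0 ≤ v)
    (hxia : x ^ 2 + ia ^ 2 = r ^ 4) (hvt : v ^ 2 + (t * r ^ 2) ^ 2 = r ^ 4)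
    (hz : zr ^ 2 + zi ^ 2 = v * (x - v + 2 * zr)) :
    (x - v + 2 * zr) ^ 2 + (ia + t * r ^ 2 + 2 * zi) ^ 2 ≤
      2 * r ^ 4 * ((1 - t) ^ (1 / 3 : ℝ) + (1 + t) ^ (1 / 3 : ℝ)) ^ 3 := by
  have hr4 : 0 < r ^ 4 := by positivity
  have ht : t ^ 2 ≤ 1 := by nlinarith
  have hpt : 0 ≤ 1 + t := by nlinarith
  have hmt : 0 ≤ 1 - t := by nlinarith
  have hpia : 0 ≤ r ^ 2 * (r ^ 2 + ia) := by nlinarith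
  have hmia : 0 ≤ r ^ 2 * (r ^ 2 - ia) := by nlinarith
  -- `u ^ 3 * U` and `w ^ 3 * W` are the fourth roots of `(1 ± t) * r ^ 2 * (r ^ 2 ± ia)`
  set u := (1 + t) ^ (1 / 12 : ℝ)
  set w := (1 - t) ^ (1 / 12 : ℝ)
  set U := (r ^ 2 * (r ^ 2 + ia)) ^ (1 / 4 : ℝ)
  set W := (r ^ 2 * (r ^ 2 - ia)) ^ (1 / 4 : ℝ)
  have hu₀ : 0 ≤ u := Real.rpow_nonneg hpt _
  have hw₀ : 0 ≤ w := Real.rpow_nonneg hmt _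
  have hU₀ : 0 ≤ U := Real.rpow_nonneg hpia _
  have hW₀ : 0 ≤ W := Real.rpow_nonneg hmia _
  have hu₄ : u ^ 4 = (1 + t) ^ (1 / 3 : ℝ) := by rw [← Real.rpow_mul_natCast hpt]; norm_num
  have hw₄ : w ^ 4 = (1 - t) ^ (1 / 3 : ℝ) := by rw [← Real.rpow_mul_natCast hmt]; norm_num
  have hu₁₂ : u ^ 12 = 1 + t := by rw [← Real.rpow_mul_natCast hpt]; norm_num
  have hw₁₂ : w ^ 12 = 1 - t := by rw [← Real.rpow_mul_natCast hmt]; norm_num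
  have hU₄ : U ^ 4 = r ^ 2 * (r ^ 2 + ia) := by rw [← Real.rpow_mul_natCast hpia]; norm_num
  have hW₄ : W ^ 4 = r ^ 2 * (r ^ 2 - ia) := by rw [← Real.rpow_mul_natCast hmia]; norm_num
  have huw : (u * w) ^ 6 * r ^ 2 = v := by
    refine (sq_eq_sq₀ (by positivity) hv).mp ?_
    calc ((u * w) ^ 6 * r ^ 2) ^ 2 = u ^ 12 * w ^ 12 * r ^ 4 := by ring
      _ = v ^ 2 := by rw [hu₁₂, hw₁₂]; linear_combination -hvt
  have hUW : (U * W) ^ 2 = r ^ 2 * x := by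
    refine (sq_eq_sq₀ (by positivity) (by positivity)).mp ?_
    calc ((U * W) ^ 2) ^ 2 = U ^ 4 * W ^ 4 := by ring
      _ = (r ^ 2 * x) ^ 2 := by rw [hU₄, hW₄]; linear_combination (-r ^ 4) * hxia
  set m := u ^ 3 * U * (w ^ 3 * W)
  have hm : m ^ 2 = v * x := by
    calc m ^ 2 = (u * w) ^ 6 * (U * W) ^ 2 := by ring
      _ = v * x := by rw [hUW, ← huw]; ring
  set N := u ^ 6 * U ^ 2 + w ^ 6 * W ^ 2
  have hN : (x + v) ^ 2 + (ia + t * r ^ 2) ^ 2 = N ^ 2 := by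
    have hN₂ : N ^ 2 = u ^ 12 * U ^ 4 + w ^ 12 * W ^ 4 + 2 * m ^ 2 := by ring
    rw [hN₂, hu₁₂, hw₁₂, hU₄, hW₄, hm]
    linear_combination hxia + hvt
  have hQ : (2 * (zr - v)) ^ 2 + (2 * zi) ^ 2 = (2 * m) ^ 2 := by
    rw [mul_pow 2 m, hm]; linear_combination 4 * hz
  calc (x - v + 2 * zr) ^ 2 + (ia + t * r ^ 2 + 2 * zi) ^ 2
      = (x + v + 2 * (zr - v)) ^ 2 + (ia + t * r ^ 2 + 2 * zi) ^ 2 := by ring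
    _ ≤ (N + 2 * m) ^ 2 := add_sq_add_add_sq_le hN hQ (by positivity) (by positivity)
    _ = (u ^ 3 * U + w ^ 3 * W) ^ 4 := by ring
    _ ≤ (u ^ 4 + w ^ 4) ^ 3 * (U ^ 4 + W ^ 4) := cube_mul_add_cube_mul_pow_four_le u w U W
    _ = 2 * r ^ 4 * ((1 - t) ^ (1 / 3 : ℝ) + (1 + t) ^ (1 / 3 : ℝ)) ^ 3 := by
      rw [hu₄, hw₄, hU₄, hW₄]; ring

lemma Quaternion.norm_sq_eq_re_sq_add_norm_im_sq (q : ℍ) : ‖q‖ ^ 2 = q.re ^ 2 + ‖q.im‖ ^ 2 := by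
  simp only [sq, ← normSq_eq_norm_mul_self, normSq_def', re_im, imI_im, imJ_im, imK_im]
  ring

lemma Quaternion.im_eq_self_of_re_eq_zero {q : ℍ} (h : q.re = 0) : q.im = q := by
  rw [← sub_re_self, h, coe_zero, sub_zero]

lemma Quaternion.norm_sq_eq_norm_sub_sq_sub_add_re (ξ ζ : ℍ) :
    ‖ξ‖ ^ 2 = ‖ξ - ζ‖ ^ 2 - ‖ζ‖ ^ 2 + 2 * (star ζ * ξ).re := by
  simp only [sq, ← normSq_eq_norm_mul_self, normSq_def', re_sub, imI_sub, imJ_sub, imK_sub,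
    re_mul, re_star, imI_star, imJ_star, imK_star]
  ring

lemma Kor_nonneg (ζ v : ℍ) : 0 ≤ Kor ζ v := by unfold Kor; positivity

lemma Kor_pow_four (ζ v : ℍ) : Kor ζ v ^ 4 = ‖ζ‖ ^ 4 + ‖v‖ ^ 2 := by
  rw [Kor, ← Real.rpow_mul_natCast (by positivity)]; norm_num

lemma Kor_pos {ζ v : ℍ} (h : (ζ, v) ≠ (0, 0)) : 0 < Kor ζ v := by
  refine (Kor_nonneg ζ v).lt_of_ne fun h0 => h ?_
  have h4 : ‖ζ‖ ^ 4 + ‖v‖ ^ 2 = 0 := by rw [← Kor_pow_four, ← h0]; norm_num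
  rw [add_eq_zero_iff_of_nonneg (by positivity) (by positivity)] at h4
  rw [norm_eq_zero.mp (pow_eq_zero_iff four_ne_zero |>.mp h4.1),
    norm_eq_zero.mp (pow_eq_zero_iff two_ne_zero |>.mp h4.2)]

lemma Kor_neg_right (ζ v : ℍ) : Kor ζ (-v) = Kor ζ v := by simp only [Kor, norm_neg]

lemma cygan_zero_eq_Kor (ξ w : ℍ) (hw : w.re = 0) : cygan ξ w 0 0 = Kor ξ w := by
  have hnorm : ‖((‖ξ‖ ^ 2 : ℝ) : ℍ) + w‖ = √(‖ξ‖ ^ 4 + ‖w‖ ^ 2) := by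
    rw [eq_comm, Real.sqrt_eq_iff_eq_sq (by positivity) (norm_nonneg _),
      Quaternion.norm_sq_eq_re_sq_add_norm_im_sq (_ + w)]
    simp only [re_add, re_coe, im_add, im_coe, hw, zero_add,
      Quaternion.im_eq_self_of_re_eq_zero hw]
    ring
  rw [cygan, Kor, sub_zero, star_zero, zero_mul, im_zero, mul_zero, sub_zero, sub_zero, hnorm,
    Real.sqrt_eq_rpow, Real.sqrt_eq_rpow, ← Real.rpow_mul (by positivity)]
  norm_num

lemma norm_mul_inv_neg_sq_add (ζ v : ℍ) (hv : v.re = 0) :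
    ‖ζ * (-((‖ζ‖ ^ 2 : ℝ) : ℍ) + v)⁻¹‖ = ‖ζ‖ / Kor ζ v ^ 2 := by
  have hq : ‖-((‖ζ‖ ^ 2 : ℝ) : ℍ) + v‖ = Kor ζ v ^ 2 := by
    refine (sq_eq_sq₀ (norm_nonneg _) (by positivity)).mp ?_
    rw [Quaternion.norm_sq_eq_re_sq_add_norm_im_sq, ← pow_mul, Kor_pow_four]
    simp only [re_add, re_neg, re_coe, im_add, im_neg, im_coe, hv, neg_zero, zero_add,
      Quaternion.im_eq_self_of_re_eq_zero hv]
    ring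
  rw [norm_mul, norm_inv, hq, div_eq_mul_inv]

lemma norm_pow_four_add_norm_sq_le_of_cygan_eq {r t : ℝ} {ζc vc ξ w : ℍ} (hr : 0 < r)
    (hvc : vc.re = 0) (hw : w.re = 0) (hnvc : ‖vc‖ = t * r ^ 2)
    (hgauge : ‖ζc‖ ^ 4 + ‖vc‖ ^ 2 = r ^ 4) (h : cygan ξ w ζc vc = r) :
    ‖ξ‖ ^ 4 + ‖w‖ ^ 2 ≤ 2 * r ^ 4 * ((1 - t) ^ (1 / 3 : ℝ) + (1 + t) ^ (1 / 3 : ℝ)) ^ 3 := by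
  set z := star ζc * ξ
  set A : ℍ := ((‖ξ - ζc‖ ^ 2 : ℝ) : ℍ) + w - vc - 2 * z.im
  have hA : ‖A‖ = r ^ 2 := (Real.sqrt_eq_iff_eq_sq (norm_nonneg _) hr.le).mp h
  have hAre : A.re = ‖ξ - ζc‖ ^ 2 := by
    simp only [A, two_mul, re_sub, re_add, re_coe, re_im, hw, hvc]; ring
  have hAim : A.im = w - vc - (z.im + z.im) := by
    simp only [A, two_mul, im_sub, im_add, im_coe, im_idem, zero_add,
      Quaternion.im_eq_self_of_re_eq_zero hw, Quaternion.im_eq_self_of_re_eq_zero hvc]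
  have hxia : (‖ξ - ζc‖ ^ 2) ^ 2 + ‖A.im‖ ^ 2 = r ^ 4 := by
    rw [← hAre, ← Quaternion.norm_sq_eq_re_sq_add_norm_im_sq, hA]; ring
  have hξ := Quaternion.norm_sq_eq_norm_sub_sq_sub_add_re ξ ζc
  have hz : z.re ^ 2 + ‖z.im‖ ^ 2 = ‖ζc‖ ^ 2 * (‖ξ - ζc‖ ^ 2 - ‖ζc‖ ^ 2 + 2 * z.re) := by
    rw [← Quaternion.norm_sq_eq_re_sq_add_norm_im_sq, ← hξ, norm_mul, Quaternion.norm_star,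
      mul_pow]
  have hwle : ‖w‖ ≤ ‖A.im‖ + t * r ^ 2 + 2 * ‖z.im‖ := by
    calc ‖w‖ = ‖A.im + vc + (z.im + z.im)‖ := by rw [hAim]; abel_nf
      _ ≤ ‖A.im‖ + ‖vc‖ + (‖z.im‖ + ‖z.im‖) :=
        norm_add₃_le.trans (by gcongr; exact norm_add_le _ _)
      _ = ‖A.im‖ + t * r ^ 2 + 2 * ‖z.im‖ := by rw [hnvc]; ring
  calc ‖ξ‖ ^ 4 + ‖w‖ ^ 2 = (‖ξ‖ ^ 2) ^ 2 + ‖w‖ ^ 2 := by ring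
    _ ≤ (‖ξ - ζc‖ ^ 2 - ‖ζc‖ ^ 2 + 2 * z.re) ^ 2 + (‖A.im‖ + t * r ^ 2 + 2 * ‖z.im‖) ^ 2 := by
      rw [hξ]; gcongr
    _ ≤ 2 * r ^ 4 * ((1 - t) ^ (1 / 3 : ℝ) + (1 + t) ^ (1 / 3 : ℝ)) ^ 3 :=
      sq_add_sq_le_of_circle hr (by positivity) (by positivity) hxia
        (by rw [← hnvc, ← hgauge]; ring) hz

lemma Kor_le_of_cygan_eq {r t : ℝ} {ζc vc ξ w : ℍ} (hr : 0 < r)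
    (hvc : vc.re = 0) (hw : w.re = 0) (hnvc : ‖vc‖ = t * r ^ 2)
    (hgauge : ‖ζc‖ ^ 4 + ‖vc‖ ^ 2 = r ^ 4) (h : cygan ξ w ζc vc = r) :
    Kor ξ w ≤
      2 ^ (1 / 4 : ℝ) * r * ((1 - t) ^ (1 / 3 : ℝ) + (1 + t) ^ (1 / 3 : ℝ)) ^ (3 / 4 : ℝ) := by
  set M := (1 - t) ^ (1 / 3 : ℝ) + (1 + t) ^ (1 / 3 : ℝ)
  have ht : t ^ 2 ≤ 1 := by
    rw [hnvc] at hgauge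
    nlinarith [pow_pos hr 4, pow_nonneg (norm_nonneg ζc) 4]
  have hM : 0 ≤ M :=
    add_nonneg (Real.rpow_nonneg (by nlinarith) _) (Real.rpow_nonneg (by nlinarith) _)
  have h2 : ((2 : ℝ) ^ (1 / 4 : ℝ)) ^ 4 = 2 := by
    rw [← Real.rpow_mul_natCast zero_le_two]; norm_num
  have hM4 : (M ^ (3 / 4 : ℝ)) ^ 4 = M ^ 3 := by
    rw [← Real.rpow_mul_natCast hM, ← Real.rpow_natCast]; norm_num
  rw [← pow_le_pow_iff_left₀ (Kor_nonneg ξ w) (by positivity) four_ne_zero, Kor_pow_four,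
    mul_pow, mul_pow, h2, hM4]
  exact norm_pow_four_add_norm_sq_le_of_cygan_eq hr hvc hw hnvc hgauge h

lemma Kor_le_of_cygan_eq_inv_Kor {ζ₁ v₁ ζc vc ξ w : ℍ} (hK : 0 < Kor ζ₁ v₁) (hvc : vc.re = 0)
    (hw : w.re = 0) (hζc : ‖ζc‖ = ‖ζ₁‖ / Kor ζ₁ v₁ ^ 2) (hnvc : ‖vc‖ = ‖v₁‖ / Kor ζ₁ v₁ ^ 4)
    (h : cygan ξ w ζc vc = 1 / Kor ζ₁ v₁) :
    Kor ξ w ≤ 2 ^ (1 / 4 : ℝ) / Kor ζ₁ v₁ *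
      ((1 - ‖v₁‖ / Kor ζ₁ v₁ ^ 2) ^ (1 / 3 : ℝ) + (1 + ‖v₁‖ / Kor ζ₁ v₁ ^ 2) ^ (1 / 3 : ℝ)) ^
        (3 / 4 : ℝ) := by
  rw [← mul_one_div]
  refine Kor_le_of_cygan_eq (one_div_pos.mpr hK) hvc hw ?_ ?_ h
  · rw [hnvc]; field_simp
  · rw [hζc, hnvc]; field_simp; linear_combination -Kor_pow_four ζ₁ v₁

/-- The isometric spheres of `B` and `B⁻¹` — the Cygan spheres of radius
`1/K(p₁)` centred at `c₊ = (−ζ₁(−|ζ₁|²−v₁)⁻¹, v₁/K⁴)` and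
`c₋ = (ζ₁(−|ζ₁|²+v₁)⁻¹, −v₁/K⁴)` — are contained in the closed Cygan ball of radius
`R₀ = (2^{1/4}/K)·((1−|v₁|/K²)^{1/3}+(1+|v₁|/K²)^{1/3})^{3/4}` about the origin. -/
theorem isometric_spheres_subset_ball
    (ζ₁ v₁ : ℍ) (hv₁ : v₁.re = 0) (hp₁ : (ζ₁, v₁) ≠ ((0 : ℍ), (0 : ℍ))) :
    ∀ ξ w : ℍ, w.re = 0 →
      (cygan ξ w (-ζ₁ * (-((‖ζ₁‖ ^ 2 : ℝ) : ℍ) - v₁)⁻¹) (((Kor ζ₁ v₁) ^ 4)⁻¹ • v₁) =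
          1 / Kor ζ₁ v₁ ∨
        cygan ξ w (ζ₁ * (-((‖ζ₁‖ ^ 2 : ℝ) : ℍ) + v₁)⁻¹) (-(((Kor ζ₁ v₁) ^ 4)⁻¹ • v₁)) =
          1 / Kor ζ₁ v₁) →
      cygan ξ w 0 0 ≤
        (2 : ℝ) ^ ((1 : ℝ) / 4) / Kor ζ₁ v₁ *
          ((1 - ‖v₁‖ / (Kor ζ₁ v₁) ^ 2) ^ ((1 : ℝ) / 3) +
            (1 + ‖v₁‖ / (Kor ζ₁ v₁) ^ 2) ^ ((1 : ℝ) / 3)) ^ ((3 : ℝ) / 4) := by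
  intro ξ w hw hsphere
  have hK := Kor_pos hp₁
  have hvc : (((Kor ζ₁ v₁) ^ 4)⁻¹ • v₁).re = 0 := by rw [re_smul, hv₁, smul_zero]
  have hnvc : ‖((Kor ζ₁ v₁) ^ 4)⁻¹ • v₁‖ = ‖v₁‖ / Kor ζ₁ v₁ ^ 4 := by
    rw [norm_smul, norm_inv, norm_pow, Real.norm_of_nonneg hK.le, inv_mul_eq_div]
  rw [cygan_zero_eq_Kor ξ w hw]
  rcases hsphere with h | h
  · refine Kor_le_of_cygan_eq_inv_Kor hK hvc hw ?_ hnvc h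
    rw [neg_mul, norm_neg, sub_eq_add_neg, ← Kor_neg_right ζ₁ v₁]
    exact norm_mul_inv_neg_sq_add ζ₁ (-v₁) (by rw [re_neg, hv₁, neg_zero])
  · exact Kor_le_of_cygan_eq_inv_Kor hK (by rw [re_neg, hvc, neg_zero]) hw
      (norm_mul_inv_neg_sq_add ζ₁ v₁ hv₁) (by rw [norm_neg, hnvc]) h
end
end

section
/- Let α ∈ (−π/4, π/4) and set λ = (cos α − sin α)^{1/3}, μ = (cos α + sin α)^{1/3}. Let θ₀ be the unique angle in (−π/4, π/4) with cos θ₀ = (λ+μ)/√(2(λ²+μ²)) and sin θ₀ = (λ−μ)/√(2(λ²+μ²)), and let f_α(θ) = cos(θ+α) + √(cos(2θ)·cos(2α)). Then the second derivative of f_α at θ₀ equals −(3√2/4)·(λ²+μ²)^{3/2}, which is strictly negative. -/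
/-!
Write `f(θ) = cos(θ + α) + √(cos 2α) · √(cos 2θ)`; where `cos 2θ > 0`,
`(√(cos 2θ))'' = -(1 + cos² 2θ) / (cos 2θ)^{3/2}`. At `θ₀` every quantity is rational in
`λ`, `μ` and `t = √(2(λ² + μ²))`: `cos 2θ₀ = 4λμ/t²`, `cos 2α = λ³μ³`,
`cos(θ₀ + α) = (λ⁴ + μ⁴)/t`, and `√(cos 2α) / (cos 2θ₀)^{3/2} = (t/2)³`. Hence
`f''(θ₀) = -(λ² + μ²)²/t - t³/8 = -3t³/8`.
-/

open Real Filter Topology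

theorem deriv_deriv_eq_of_eventually_hasDerivAt {f f' : ℝ → ℝ} {x f'' : ℝ}
    (hf : ∀ᶠ y in 𝓝 x, HasDerivAt f (f' y) y) (hf' : HasDerivAt f' f'' x) :
    deriv (deriv f) x = f'' := by
  have hderiv : deriv f =ᶠ[𝓝 x] f' := hf.mono fun _ hy => hy.deriv
  rw [hderiv.deriv_eq]
  exact hf'.deriv

theorem hasDerivAt_sqrt_cos_two_mul {θ : ℝ} (h : 0 < cos (2 * θ)) :
    HasDerivAt (fun θ => √(cos (2 * θ))) (-(sin (2 * θ) / √(cos (2 * θ)))) θ := by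
  have hs : √(cos (2 * θ)) ≠ 0 := (sqrt_pos.2 h).ne'
  refine (((hasDerivAt_id' θ).const_mul 2).cos.sqrt h.ne').congr_deriv ?_
  field_simp

theorem hasDerivAt_sin_two_mul_div_sqrt_cos_two_mul {θ : ℝ} (h : 0 < cos (2 * θ)) :
    HasDerivAt (fun θ => sin (2 * θ) / √(cos (2 * θ)))
      ((1 + cos (2 * θ) ^ 2) / √(cos (2 * θ)) ^ 3) θ := by
  have hs : 0 < √(cos (2 * θ)) := sqrt_pos.2 h
  have hsq : √(cos (2 * θ)) ^ 2 = cos (2 * θ) := sq_sqrt h.le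
  refine (((hasDerivAt_id' θ).const_mul 2).sin.div (hasDerivAt_sqrt_cos_two_mul h)
    hs.ne').congr_deriv ?_
  field_simp
  linear_combination 2 * cos (2 * θ) * hsq + sin_sq_add_cos_sq (2 * θ)

theorem deriv_deriv_cos_add_add_sqrt_cos_two_mul_mul {α c θ : ℝ} (hc : 0 ≤ c)
    (hθ : 0 < cos (2 * θ)) :
    deriv (deriv fun θ => cos (θ + α) + √(cos (2 * θ) * c)) θ =
      -cos (θ + α) - √c * ((1 + cos (2 * θ) ^ 2) / √(cos (2 * θ)) ^ 3) := by
  have hf : (fun θ => cos (θ + α) + √(cos (2 * θ) * c)) =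
      fun θ => cos (θ + α) + √c * √(cos (2 * θ)) := by
    funext θ
    rw [sqrt_mul' _ hc, mul_comm]
  have hpos : ∀ᶠ y in 𝓝 θ, 0 < cos (2 * y) :=
    continuousAt_const.eventually_lt (by fun_prop) hθ
  rw [hf]
  refine deriv_deriv_eq_of_eventually_hasDerivAt
    (f' := fun y => -sin (y + α) + √c * -(sin (2 * y) / √(cos (2 * y))))
    (hpos.mono fun y hy => ?_) ?_
  · exact (((hasDerivAt_id' y).add_const α).cos.add
      ((hasDerivAt_sqrt_cos_two_mul hy).const_mul √c)).congr_deriv (by ring)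
  · exact (((hasDerivAt_id' θ).add_const α).sin.neg.add
      ((hasDerivAt_sin_two_mul_div_sqrt_cos_two_mul hθ).neg.const_mul √c)).congr_deriv (by ring)

theorem critical_second_derivative_eq {l m t : ℝ} (hl : 0 < l) (hm : 0 < m) (ht : 0 < t)
    (ht2 : t ^ 2 = 2 * (l ^ 2 + m ^ 2)) :
    -((l ^ 4 + m ^ 4) / t) -
        √(l ^ 3 * m ^ 3) * ((1 + (4 * l * m / t ^ 2) ^ 2) / √(4 * l * m / t ^ 2) ^ 3) =
      -(3 * √2 / 4) * (l ^ 2 + m ^ 2) ^ ((3 : ℝ) / 2) := by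
  set x := 4 * l * m / t ^ 2 with hx
  have hsqrt_x : 0 < √x := sqrt_pos.2 (by positivity)
  have hsqrt_cube : √(l ^ 3 * m ^ 3) = √x ^ 3 * (t / 2) ^ 3 := by
    have hx2 : √x ^ 2 = x := sq_sqrt (by positivity)
    have hlm : l ^ 3 * m ^ 3 = (√x ^ 3 * (t / 2) ^ 3) ^ 2 := by
      rw [mul_pow, ← pow_mul, mul_comm 3, pow_mul, hx2, hx]
      field_simp
      ring
    rw [hlm, sqrt_sq (by positivity)]
  have hrpow : (l ^ 2 + m ^ 2) ^ ((3 : ℝ) / 2) = √(l ^ 2 + m ^ 2) ^ 3 := by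
    rw [rpow_div_two_eq_sqrt _ (by positivity)]
    norm_cast
  have hsqrt_sum : √(l ^ 2 + m ^ 2) = t / √2 := by
    rw [eq_div_iff (by positivity), ← sqrt_mul (by positivity), mul_comm, ← ht2, sqrt_sq ht.le]
  have h2 : √2 ^ 2 = 2 := sq_sqrt (by norm_num)
  rw [hrpow, hsqrt_sum, hsqrt_cube]
  field_simp
  rw [hx]
  field_simp
  linear_combination (-64 * l ^ 2 * m ^ 2 - 32 * l ^ 4 - 32 * m ^ 4 - 4 * t ^ 4) * h2
    + 16 * (t ^ 2 + 2 * (l ^ 2 + m ^ 2)) * ht2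

theorem cos_sub_sin_pos_and_cos_add_sin_pos {α : ℝ} (hα : α ∈ Set.Ioo (-(π / 4)) (π / 4)) :
    0 < cos α - sin α ∧ 0 < cos α + sin α := by
  obtain ⟨hα₁, hα₂⟩ := hα
  have hcos : 0 < cos α := cos_pos_of_mem_Ioo ⟨by linarith [pi_pos], by linarith [pi_pos]⟩
  have hcos_two_mul : 0 < cos α ^ 2 - sin α ^ 2 :=
    cos_two_mul' α ▸ cos_pos_of_mem_Ioo ⟨by linarith, by linarith⟩
  constructor <;> nlinarith

theorem second_derivative_at_critical_point_general
    (α : ℝ) (hα : α ∈ Set.Ioo (-(π / 4)) (π / 4))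
    (l m θ₀ : ℝ)
    (hl : l = (Real.cos α - Real.sin α) ^ ((1 : ℝ) / 3))
    (hm : m = (Real.cos α + Real.sin α) ^ ((1 : ℝ) / 3))
    (hcos : Real.cos θ₀ = (l + m) / Real.sqrt (2 * (l ^ 2 + m ^ 2)))
    (hsin : Real.sin θ₀ = (l - m) / Real.sqrt (2 * (l ^ 2 + m ^ 2))) :
    deriv (deriv (fun θ : ℝ =>
        Real.cos (θ + α) + Real.sqrt (Real.cos (2 * θ) * Real.cos (2 * α)))) θ₀ =
      -(3 * Real.sqrt 2 / 4) * (l ^ 2 + m ^ 2) ^ ((3 : ℝ) / 2) ∧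
    -(3 * Real.sqrt 2 / 4) * (l ^ 2 + m ^ 2) ^ ((3 : ℝ) / 2) < 0 := by
  obtain ⟨hsub, hadd⟩ := cos_sub_sin_pos_and_cos_add_sin_pos hα
  have hl3 : l ^ 3 = cos α - sin α := by
    simpa [hl] using rpow_inv_natCast_pow hsub.le (n := 3) (by norm_num)
  have hm3 : m ^ 3 = cos α + sin α := by
    simpa [hm] using rpow_inv_natCast_pow hadd.le (n := 3) (by norm_num)
  have hl0 : 0 < l := hl ▸ rpow_pos_of_pos hsub _
  have hm0 : 0 < m := hm ▸ rpow_pos_of_pos hadd _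
  set t := √(2 * (l ^ 2 + m ^ 2))
  have ht : 0 < t := by positivity
  have ht2 : t ^ 2 = 2 * (l ^ 2 + m ^ 2) := sq_sqrt (by positivity)
  have hcos2θ : cos (2 * θ₀) = 4 * l * m / t ^ 2 := by rw [cos_two_mul', hcos, hsin]; ring
  have hcos2α : cos (2 * α) = l ^ 3 * m ^ 3 := by rw [cos_two_mul', hl3, hm3]; ring
  have hcosθα : cos (θ₀ + α) = (l ^ 4 + m ^ 4) / t := by
    rw [cos_add, hcos, hsin, show cos α = (l ^ 3 + m ^ 3) / 2 by rw [hl3, hm3]; ring,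
      show sin α = (m ^ 3 - l ^ 3) / 2 by rw [hl3, hm3]; ring]
    ring
  rw [deriv_deriv_cos_add_add_sqrt_cos_two_mul_mul (by rw [hcos2α]; positivity)
    (by rw [hcos2θ]; positivity), hcosθα, hcos2θ, hcos2α]
  exact ⟨critical_second_derivative_eq hl0 hm0 ht ht2,
    by rw [neg_mul, neg_lt_zero]; positivity⟩

/-- The second derivative of
`f_α(θ) = cos(θ+α) + √(cos 2θ · cos 2α)` at the critical point `θ₀` equals
`−(3√2/4)·(λ²+μ²)^{3/2} < 0`, where `λ = (cos α − sin α)^{1/3}`,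
`μ = (cos α + sin α)^{1/3}`. -/
theorem second_derivative_at_critical_point
    (α : ℝ) (hα : α ∈ Set.Ioo (-(π / 4)) (π / 4))
    (l m θ₀ : ℝ)
    (hl : l = (Real.cos α - Real.sin α) ^ ((1 : ℝ) / 3))
    (hm : m = (Real.cos α + Real.sin α) ^ ((1 : ℝ) / 3))
    (hθ₀ : θ₀ ∈ Set.Ioo (-(π / 4)) (π / 4))
    (hcos : Real.cos θ₀ = (l + m) / Real.sqrt (2 * (l ^ 2 + m ^ 2)))
    (hsin : Real.sin θ₀ = (l - m) / Real.sqrt (2 * (l ^ 2 + m ^ 2))) :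
    deriv (deriv (fun θ : ℝ =>
        Real.cos (θ + α) + Real.sqrt (Real.cos (2 * θ) * Real.cos (2 * α)))) θ₀ =
      -(3 * Real.sqrt 2 / 4) * (l ^ 2 + m ^ 2) ^ ((3 : ℝ) / 2) ∧
    -(3 * Real.sqrt 2 / 4) * (l ^ 2 + m ^ 2) ^ ((3 : ℝ) / 2) < 0 :=
  second_derivative_at_critical_point_general α hα l m θ₀ hl hm hcos hsin
end

section
/- For all ψ₁, ψ₂ ∈ [−π/2, π/2], the inequality 2·cos((ψ₁+ψ₂)/2) + 2·√(cos ψ₁ · cos ψ₂) ≤ √2·((1−sin ψ₁)^{1/3} + (1+sin ψ₁)^{1/3})^{3/2} holds. -/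
/-!
Write `a, b = cos(ψ₁/2) ± sin(ψ₁/2)` and `p, q = cos(ψ₂/2) ± sin(ψ₂/2)`, all nonnegative on the
given range. Then `1 + sin ψ₁ = a²`, `1 - sin ψ₁ = b²`, `cos ψ₁ = a b`, `cos ψ₂ = p q`,
`p² + q² = 2` and `2 cos((ψ₁ + ψ₂)/2) = a q + b p`, so the left-hand side is `(√(aq) + √(bp))²`.
Hölder's inequality with exponents `4/3` and `4` bounds `√a √q + √b √p` by
`(a^{2/3} + b^{2/3})^{3/4} (q² + p²)^{1/4}`, and squaring gives the right-hand side.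
-/

open Real

theorem mul_add_mul_le_Lp_mul_Lq_of_nonneg {x₁ x₂ y₁ y₂ p q : ℝ} (hpq : p.HolderConjugate q)
    (hx₁ : 0 ≤ x₁) (hx₂ : 0 ≤ x₂) (hy₁ : 0 ≤ y₁) (hy₂ : 0 ≤ y₂) :
    x₁ * y₁ + x₂ * y₂ ≤ (x₁ ^ p + x₂ ^ p) ^ (1 / p) * (y₁ ^ q + y₂ ^ q) ^ (1 / q) := by
  have := inner_le_Lp_mul_Lq_of_nonneg Finset.univ (f := ![x₁, x₂]) (g := ![y₁, y₂]) hpq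
    (by intro i _; fin_cases i <;> assumption) (by intro i _; fin_cases i <;> assumption)
  simpa [Fin.sum_univ_two] using this

theorem sqrt_mul_add_sqrt_mul_sq {a b p q : ℝ} (ha : 0 ≤ a) (hb : 0 ≤ b) (hp : 0 ≤ p)
    (hq : 0 ≤ q) : (√(a * q) + √(b * p)) ^ 2 = a * q + b * p + 2 * √(a * b * (p * q)) := by
  rw [add_sq, sq_sqrt (by positivity), sq_sqrt (by positivity), mul_assoc 2,
    ← sqrt_mul (by positivity), mul_mul_mul_comm, mul_comm q p, add_right_comm]

theorem sqrt_mul_add_sqrt_mul_sq_le {a b p q : ℝ} (ha : 0 ≤ a) (hb : 0 ≤ b) (hp : 0 ≤ p)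
    (hq : 0 ≤ q) :
    (√(a * q) + √(b * p)) ^ 2 ≤
      (a ^ ((2 : ℝ) / 3) + b ^ ((2 : ℝ) / 3)) ^ ((3 : ℝ) / 2) * √(q ^ 2 + p ^ 2) := by
  have hpq : (4 / 3 : ℝ).HolderConjugate 4 := holderConjugate_iff.mpr ⟨by norm_num, by norm_num⟩
  have sqrt_rpow_four_thirds {x : ℝ} (hx : 0 ≤ x) : √x ^ (4 / 3 : ℝ) = x ^ ((2 : ℝ) / 3) := by
    rw [← rpow_div_two_eq_sqrt _ hx]; norm_num
  have sqrt_rpow_four {x : ℝ} (hx : 0 ≤ x) : √x ^ (4 : ℝ) = x ^ 2 := by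
    rw [← rpow_div_two_eq_sqrt _ hx]; norm_num
  have holder := mul_add_mul_le_Lp_mul_Lq_of_nonneg hpq (sqrt_nonneg a) (sqrt_nonneg b)
    (sqrt_nonneg q) (sqrt_nonneg p)
  rw [sqrt_rpow_four_thirds ha, sqrt_rpow_four_thirds hb, sqrt_rpow_four hq,
    sqrt_rpow_four hp, ← sqrt_mul ha, ← sqrt_mul hb] at holder
  set A := a ^ ((2 : ℝ) / 3) + b ^ ((2 : ℝ) / 3)
  set B := q ^ 2 + p ^ 2
  have hA : 0 ≤ A := by positivity
  have hB : 0 ≤ B := by positivity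
  calc (√(a * q) + √(b * p)) ^ 2
      ≤ (A ^ (1 / (4 / 3) : ℝ) * B ^ (1 / 4 : ℝ)) ^ 2 := by gcongr
    _ = A ^ ((3 : ℝ) / 2) * √B := by
      rw [mul_pow, ← rpow_mul_natCast hA, ← rpow_mul_natCast hB, sqrt_eq_rpow]
      norm_num

theorem cos_sub_sin_nonneg_s19 {θ : ℝ} (h₁ : -(3 * π / 4) ≤ θ) (h₂ : θ ≤ π / 4) :
    0 ≤ cos θ - sin θ := by
  have h : cos θ - sin θ = √2 * cos (θ + π / 4) := by
    rw [cos_add, cos_pi_div_four, sin_pi_div_four]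
    linear_combination -(cos θ - sin θ) / 2 * sq_sqrt (zero_le_two : (0 : ℝ) ≤ 2)
  rw [h]
  exact mul_nonneg (sqrt_nonneg 2) (cos_nonneg_of_mem_Icc ⟨by linarith, by linarith⟩)

theorem cos_add_sin_nonneg_s19 {θ : ℝ} (h₁ : -(π / 4) ≤ θ) (h₂ : θ ≤ 3 * π / 4) :
    0 ≤ cos θ + sin θ := by
  simpa [sub_eq_add_neg] using cos_sub_sin_nonneg_s19 (θ := -θ) (by linarith) (by linarith)

theorem one_add_sin_eq_sq (x : ℝ) : 1 + sin x = (cos (x / 2) + sin (x / 2)) ^ 2 := by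
  conv_lhs => rw [← mul_div_cancel₀ x two_ne_zero, sin_two_mul]
  linear_combination -cos_sq_add_sin_sq (x / 2)

theorem one_sub_sin_eq_sq (x : ℝ) : 1 - sin x = (cos (x / 2) - sin (x / 2)) ^ 2 := by
  conv_lhs => rw [← mul_div_cancel₀ x two_ne_zero, sin_two_mul]
  linear_combination -cos_sq_add_sin_sq (x / 2)

theorem cos_eq_mul_half (x : ℝ) :
    cos x = (cos (x / 2) + sin (x / 2)) * (cos (x / 2) - sin (x / 2)) := by
  conv_lhs => rw [← mul_div_cancel₀ x two_ne_zero, cos_two_mul']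
  ring

theorem cos_sub_sin_sq_add_cos_add_sin_sq (x : ℝ) :
    (cos x - sin x) ^ 2 + (cos x + sin x) ^ 2 = 2 := by
  linear_combination 2 * cos_sq_add_sin_sq x

theorem two_mul_cos_add_div_two (x y : ℝ) :
    2 * cos ((x + y) / 2) =
      (cos (x / 2) + sin (x / 2)) * (cos (y / 2) - sin (y / 2)) +
        (cos (x / 2) - sin (x / 2)) * (cos (y / 2) + sin (y / 2)) := by
  rw [add_div, cos_add]
  ring

/-- For all `ψ₁, ψ₂ ∈ [−π/2, π/2]`,
`2cos((ψ₁+ψ₂)/2) + 2√(cos ψ₁ cos ψ₂) ≤ √2·((1−sin ψ₁)^{1/3}+(1+sin ψ₁)^{1/3})^{3/2}`. -/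
theorem boundary_case_inequality
    (ψ₁ ψ₂ : ℝ) (hψ₁ : ψ₁ ∈ Set.Icc (-(π / 2)) (π / 2))
    (hψ₂ : ψ₂ ∈ Set.Icc (-(π / 2)) (π / 2)) :
    2 * Real.cos ((ψ₁ + ψ₂) / 2) + 2 * Real.sqrt (Real.cos ψ₁ * Real.cos ψ₂) ≤
      Real.sqrt 2 *
        ((1 - Real.sin ψ₁) ^ ((1 : ℝ) / 3) +
          (1 + Real.sin ψ₁) ^ ((1 : ℝ) / 3)) ^ ((3 : ℝ) / 2) := by
  obtain ⟨h₁, h₁'⟩ := hψ₁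
  obtain ⟨h₂, h₂'⟩ := hψ₂
  have hπ := pi_pos
  have ha := cos_add_sin_nonneg_s19 (θ := ψ₁ / 2) (by linarith) (by linarith)
  have hb := cos_sub_sin_nonneg_s19 (θ := ψ₁ / 2) (by linarith) (by linarith)
  have hp := cos_add_sin_nonneg_s19 (θ := ψ₂ / 2) (by linarith) (by linarith)
  have hq := cos_sub_sin_nonneg_s19 (θ := ψ₂ / 2) (by linarith) (by linarith)
  have cube_root_sq {x : ℝ} (hx : 0 ≤ x) : (x ^ 2) ^ ((1 : ℝ) / 3) = x ^ ((2 : ℝ) / 3) := by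
    rw [← rpow_natCast_mul hx]; norm_num
  rw [two_mul_cos_add_div_two, cos_eq_mul_half ψ₁, cos_eq_mul_half ψ₂, one_sub_sin_eq_sq,
    one_add_sin_eq_sq, cube_root_sq ha, cube_root_sq hb]
  set a := cos (ψ₁ / 2) + sin (ψ₁ / 2)
  set b := cos (ψ₁ / 2) - sin (ψ₁ / 2)
  set p := cos (ψ₂ / 2) + sin (ψ₂ / 2)
  set q := cos (ψ₂ / 2) - sin (ψ₂ / 2)
  have hqp : q ^ 2 + p ^ 2 = 2 := cos_sub_sin_sq_add_cos_add_sin_sq (ψ₂ / 2)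
  calc a * q + b * p + 2 * √(a * b * (p * q))
      = (√(a * q) + √(b * p)) ^ 2 := (sqrt_mul_add_sqrt_mul_sq ha hb hp hq).symm
    _ ≤ (a ^ ((2 : ℝ) / 3) + b ^ ((2 : ℝ) / 3)) ^ ((3 : ℝ) / 2) * √(q ^ 2 + p ^ 2) :=
        sqrt_mul_add_sqrt_mul_sq_le ha hb hp hq
    _ = _ := by rw [hqp, add_comm, mul_comm]
end
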